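/- arXiv:2312.00393 — 14 statements merged into one kernel-verified Lean document; each statement's English description precedes it below -/
import Mathlib

section
/- Let M be an infinite set endowed with the discrete metric d(p,q) = 1 for all p ≠ q, with some distinguished base point. A Lipschitz function f : M → ℝ with f(0) = 0 strongly attains its norm if and only if both sup_{p∈M} f(p) and inf_{p∈M} f(p) are attained (by points of M). -/
open Filter Metric MeasureTheory

noncomputable def lipNorm {M : Type*} [MetricSpace M] (f : M → ℝ) : ℝ :=
  sSup {r : ℝ | ∃ p q : M, p ≠ q ∧ r = |f q - f p| / dist p q}

noncomputable def pnormAt {M : Type*} [MetricSpace M] (f : M → ℝ) (p : M) : ℝ :=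
  sSup {r : ℝ | ∃ q : M, q ≠ p ∧ r = |f q - f p| / dist p q}

/-- `f` strongly attains its (Lipschitz) norm. -/
def StronglyAttains {M : Type*} [MetricSpace M] (f : M → ℝ) : Prop :=
  ∃ p q : M, p ≠ q ∧ |f q - f p| / dist p q = lipNorm f

/-- `f` attains its pointwise norm. -/
def PointwiseAttains {M : Type*} [MetricSpace M] (f : M → ℝ) : Prop :=
  ∃ p : M, pnormAt f p = lipNorm f

/-- in the discrete metric, strong attainment ↔ both sup and inf attained. -/
theorem stmt1 {M : Type*} [MetricSpace M] [Infinite M] (z : M)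
    (hd : ∀ p q : M, p ≠ q → dist p q = 1)
    (f : M → ℝ) (h0 : f z = 0) (hlip : ∃ K, LipschitzWith K f) :
    StronglyAttains f ↔ ((∃ p : M, ∀ q : M, f q ≤ f p) ∧ (∃ p : M, ∀ q : M, f p ≤ f q)) := by

  obtain ⟨K, hK⟩ := hlip
  have hb : ∀ p q : M, |f q - f p| ≤ (K : ℝ) := by
    intro p q
    rcases eq_or_ne q p with h | h
    · simp [h, NNReal.coe_nonneg]
    · have := hK.dist_le_mul q p
      rw [Real.dist_eq, hd q p h] at this
      linarith
  have hmem : ∀ p q : M, p ≠ q →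
      |f q - f p| ∈ {r : ℝ | ∃ p q : M, p ≠ q ∧ r = |f q - f p| / dist p q} := by
    intro p q h
    exact ⟨p, q, h, by rw [hd p q h, div_one]⟩
  have hbdd : BddAbove {r : ℝ | ∃ p q : M, p ≠ q ∧ r = |f q - f p| / dist p q} := by
    refine ⟨K, ?_⟩
    rintro r ⟨p, q, h, rfl⟩
    rw [hd p q h, div_one]
    exact hb p q
  have hle : ∀ p q : M, p ≠ q → |f q - f p| ≤ lipNorm f := fun p q h =>
    le_csSup hbdd (hmem p q h)
  obtain ⟨a, b, hab⟩ := exists_pair_ne M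
  have hne : {r : ℝ | ∃ p q : M, p ≠ q ∧ r = |f q - f p| / dist p q}.Nonempty :=
    ⟨_, hmem a b hab⟩
  constructor
  · rintro ⟨p, q, hpq, heq⟩
    rw [hd p q hpq, div_one] at heq
    have key : ∀ u v : M, u ≠ v → f u - f v = lipNorm f →
        (∀ r, f r ≤ f u) ∧ (∀ r, f v ≤ f r) := by
      intro u v huv hL
      have hL0 : 0 ≤ lipNorm f := le_trans (abs_nonneg _) (hle u v huv)
      have hvu : f v ≤ f u := by linarith
      constructor
      · intro r
        by_contra h
        push_neg at h
        have hrv : v ≠ r := by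
          intro e; rw [e] at hvu; linarith
        have := hle v r hrv
        have : f r - f v ≤ lipNorm f := le_trans (le_abs_self _) this
        linarith
      · intro r
        by_contra h
        push_neg at h
        have hru : u ≠ r := by
          intro e; rw [← e] at h; linarith
        have := hle u r hru
        rw [abs_sub_comm] at this
        have : f u - f r ≤ lipNorm f := le_trans (le_abs_self _) this
        linarith
    rcases abs_cases (f q - f p) with ⟨h1, _⟩ | ⟨h1, _⟩
    · have := key q p hpq.symm (by linarith)
      exact ⟨⟨q, this.1⟩, ⟨p, this.2⟩⟩
    · have := key p q hpq (by linarith)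
      exact ⟨⟨p, this.1⟩, ⟨q, this.2⟩⟩
  · rintro ⟨⟨p, hp⟩, ⟨q, hq⟩⟩
    rcases eq_or_ne p q with rfl | hpq
    · -- f is constant
      have hconst : ∀ r, f r = f p := fun r => le_antisymm (hp r) (hq r)
      have hL : lipNorm f = 0 := by
        apply le_antisymm
        · apply csSup_le hne
          rintro r ⟨x, y, hxy, rfl⟩
          rw [hd x y hxy, div_one, hconst x, hconst y]
          simp
        · have h0' : (0 : ℝ) ≤ |f b - f a| := abs_nonneg _
          exact le_trans h0' (hle a b hab)
      refine ⟨a, b, hab, ?_⟩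
      rw [hd a b hab, div_one, hconst a, hconst b, hL]
      simp
    · have hqp : f q ≤ f p := hq p
      have hL : lipNorm f = f p - f q := by
        apply le_antisymm
        · apply csSup_le hne
          rintro r ⟨x, y, hxy, rfl⟩
          rw [hd x y hxy, div_one]
          rw [abs_le]
          constructor
          · have := hp x; have := hq y; linarith
          · have := hp y; have := hq x; linarith
        · have := hle p q hpq
          rwa [abs_of_nonpos (by linarith), neg_sub] at this
      refine ⟨p, q, hpq, ?_⟩
      rw [hd p q hpq, div_one, hL, abs_of_nonpos (by linarith), neg_sub]
end

section
/- Let M be an infinite set endowed with the discrete metric d(p,q) = 1 for all p ≠ q, with some distinguished base point. A Lipschitz function f : M → ℝ with f(0) = 0 attains its pointwise norm if and only if at least one of sup_{p∈M} f(p) or inf_{p∈M} f(p) is attained (by a point of M). -/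
open Filter Metric MeasureTheory

/-- in the discrete metric, pointwise attainment ↔ sup or inf attained. -/
theorem stmt2 {M : Type*} [MetricSpace M] [Infinite M] (z : M)
    (hd : ∀ p q : M, p ≠ q → dist p q = 1)
    (f : M → ℝ) (h0 : f z = 0) (hlip : ∃ K, LipschitzWith K f) :
    PointwiseAttains f ↔ ((∃ p : M, ∀ q : M, f q ≤ f p) ∨ (∃ p : M, ∀ q : M, f p ≤ f q)) := by
  obtain ⟨K, hK⟩ := hlip
  set B : ℝ := (K : ℝ) with hBdef
  have hBnn : (0:ℝ) ≤ B := K.coe_nonneg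
  have hbd : ∀ a b : M, |f b - f a| ≤ B := by
    intro a b
    have h := hK.dist_le_mul b a
    rw [Real.dist_eq] at h
    rcases eq_or_ne b a with rfl | hne
    · simpa using hBnn
    · rw [hd b a hne] at h; linarith
  set L : Set ℝ := {r : ℝ | ∃ p q : M, p ≠ q ∧ r = |f q - f p| / dist p q} with hLdef
  have hLipdef : lipNorm f = sSup L := rfl
  have hLmem : ∀ a b : M, a ≠ b → |f b - f a| ∈ L := by
    intro a b h
    exact ⟨a, b, h, by rw [hd a b h, div_one]⟩
  have hLbdd : BddAbove L := by
    refine ⟨B, ?_⟩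
    rintro r ⟨p, q, h, rfl⟩
    rw [hd p q h, div_one]; exact hbd p q
  obtain ⟨w, hw⟩ := exists_ne z
  have hLne : L.Nonempty := ⟨_, hLmem w z hw⟩
  -- the set used in pnormAt
  have hPdef : ∀ p : M, pnormAt f p =
      sSup {r : ℝ | ∃ q : M, q ≠ p ∧ r = |f q - f p| / dist p q} := fun p => rfl
  have hPmem : ∀ p q : M, q ≠ p →
      |f q - f p| ∈ {r : ℝ | ∃ q : M, q ≠ p ∧ r = |f q - f p| / dist p q} := by
    intro p q h
    exact ⟨q, h, by rw [hd p q (Ne.symm h), div_one]⟩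
  have hPbdd : ∀ p : M, BddAbove {r : ℝ | ∃ q : M, q ≠ p ∧ r = |f q - f p| / dist p q} := by
    intro p
    refine ⟨B, ?_⟩
    rintro r ⟨q, h, rfl⟩
    rw [hd p q (Ne.symm h), div_one]; exact hbd p q
  have hPne : ∀ p : M, Set.Nonempty {r : ℝ | ∃ q : M, q ≠ p ∧ r = |f q - f p| / dist p q} := by
    intro p
    obtain ⟨q, hq⟩ := exists_ne p
    exact ⟨_, hPmem p q hq⟩
  have key : ∀ a b : M, f a - f b ≤ lipNorm f := by
    intro a b
    rw [hLipdef]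
    rcases eq_or_ne a b with rfl | h
    · have := le_csSup hLbdd (hLmem w z hw)
      have h0' : (0:ℝ) ≤ |f z - f w| := abs_nonneg _
      linarith
    · exact le_trans (le_abs_self _) (le_csSup hLbdd (hLmem b a (Ne.symm h)))
  have hRa : BddAbove (Set.range f) := by
    refine ⟨B, ?_⟩
    rintro y ⟨b, rfl⟩
    have := hbd z b; rw [h0] at this
    calc f b ≤ |f b - 0| := by rw [sub_zero]; exact le_abs_self _
    _ ≤ B := this
  have hRb : BddBelow (Set.range f) := by
    refine ⟨-B, ?_⟩
    rintro y ⟨b, rfl⟩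
    have := hbd z b; rw [h0] at this
    have : -(f b - 0) ≤ |f b - 0| := neg_le_abs _
    have h2 := hbd z b; rw [h0] at h2
    rw [sub_zero] at this
    linarith [abs_le.mp h2]
  set S : ℝ := sSup (Set.range f) with hSdef
  set I : ℝ := sInf (Set.range f) with hIdef
  constructor
  · rintro ⟨p, hp⟩
    by_contra hcon
    push_neg at hcon
    obtain ⟨hmax, hmin⟩ := hcon
    obtain ⟨q1, hq1⟩ := hmax p
    obtain ⟨q2, hq2⟩ := hmin p
    have hpS : f p < S := lt_of_lt_of_le hq1 (le_csSup hRa ⟨q1, rfl⟩)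
    have hIp : I < f p := lt_of_le_of_lt (csInf_le hRb ⟨q2, rfl⟩) hq2
    have hSI : S - I ≤ lipNorm f := by
      have h1 : S ≤ I + lipNorm f := by
        refine csSup_le (Set.range_nonempty f) ?_
        rintro y ⟨a, rfl⟩
        have h2 : f a - lipNorm f ≤ I := by
          refine le_csInf (Set.range_nonempty f) ?_
          rintro y ⟨b, rfl⟩
          linarith [key a b]
        linarith
      linarith
    have hPle : pnormAt f p ≤ max (S - f p) (f p - I) := by
      rw [hPdef]
      refine csSup_le (hPne p) ?_
      rintro r ⟨q, hq, rfl⟩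
      rw [hd p q (Ne.symm hq), div_one, abs_sub_le_iff]
      have h1 : f q ≤ S := le_csSup hRa ⟨q, rfl⟩
      have h2 : I ≤ f q := csInf_le hRb ⟨q, rfl⟩
      constructor
      · linarith [le_max_left (S - f p) (f p - I)]
      · linarith [le_max_right (S - f p) (f p - I)]
    have hm : max (S - f p) (f p - I) < S - I := max_lt (by linarith) (by linarith)
    linarith [hp ▸ hPle]
  · rintro (⟨p, hp⟩ | ⟨p, hp⟩) <;> refine ⟨p, le_antisymm ?_ ?_⟩
    · rw [hPdef]
      refine csSup_le (hPne p) ?_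
      rintro r ⟨q, hq, rfl⟩
      rw [hLipdef]
      exact le_csSup hLbdd ⟨p, q, Ne.symm hq, rfl⟩
    · rw [hLipdef, hPdef]
      refine csSup_le hLne ?_
      rintro r ⟨a, b, hab, rfl⟩
      rw [hd a b hab, div_one]
      rcases eq_or_ne a p with rfl | ha
      · exact le_csSup (hPbdd a) (hPmem a b (Ne.symm hab))
      · rcases eq_or_ne b p with rfl | hb
        · rw [abs_sub_comm]
          exact le_csSup (hPbdd b) (hPmem b a hab)
        · have h1 : |f a - f p| ∈ _ := hPmem p a ha
          have h2 : |f b - f p| ∈ _ := hPmem p b hb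
          have e1 : |f a - f p| = f p - f a := by
            rw [abs_sub_comm]; exact abs_of_nonneg (by linarith [hp a])
          have e2 : |f b - f p| = f p - f b := by
            rw [abs_sub_comm]; exact abs_of_nonneg (by linarith [hp b])
          have l1 := le_csSup (hPbdd p) h1
          have l2 := le_csSup (hPbdd p) h2
          rw [e1] at l1; rw [e2] at l2
          rw [abs_sub_le_iff]
          constructor <;> linarith [hp a, hp b]
    · rw [hPdef]
      refine csSup_le (hPne p) ?_
      rintro r ⟨q, hq, rfl⟩
      rw [hLipdef]
      exact le_csSup hLbdd ⟨p, q, Ne.symm hq, rfl⟩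
    · rw [hLipdef, hPdef]
      refine csSup_le hLne ?_
      rintro r ⟨a, b, hab, rfl⟩
      rw [hd a b hab, div_one]
      rcases eq_or_ne a p with rfl | ha
      · exact le_csSup (hPbdd a) (hPmem a b (Ne.symm hab))
      · rcases eq_or_ne b p with rfl | hb
        · rw [abs_sub_comm]
          exact le_csSup (hPbdd b) (hPmem b a hab)
        · have h1 : |f a - f p| ∈ _ := hPmem p a ha
          have h2 : |f b - f p| ∈ _ := hPmem p b hb
          have e1 : |f a - f p| = f a - f p := abs_of_nonneg (by linarith [hp a])
          have e2 : |f b - f p| = f b - f p := abs_of_nonneg (by linarith [hp b])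
          have l1 := le_csSup (hPbdd p) h1
          have l2 := le_csSup (hPbdd p) h2
          rw [e1] at l1; rw [e2] at l2
          rw [abs_sub_le_iff]
          constructor <;> linarith [hp a, hp b]
end

section
/- Let M = {0} ∪ {pₙ : n ∈ ℕ} be the countable pointed metric space with d(0, pₙ) = 1 for all n, and d(pₙ, pₘ) = 2 for all n ≠ m. Then the map sending a bounded sequence a = (aₙ) ∈ ℓ∞ to the function f_a with f_a(0) = 0 and f_a(pₙ) = aₙ is an isometric linear isomorphism from ℓ∞ onto Lip₀(M), and moreover every f_a attains its pointwise norm at the point 0. Consequently PNA(M) = Lip₀(M). -/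
open Filter Metric MeasureTheory

/-- The function on M = {0} ∪ {pₙ} induced by a sequence: none ↦ 0, some n ↦ a n. -/
noncomputable def fa (a : ℕ → ℝ) : Option ℕ → ℝ := fun x => x.elim 0 a

/-- The properties asserted in STATEMENT 3, for a given metric on Option ℕ
(base point = none). -/
def stmt3Prop [MetricSpace (Option ℕ)] : Prop :=
  (∀ n : ℕ, dist (some n : Option ℕ) (none : Option ℕ) = 1) ∧
  (∀ n m : ℕ, n ≠ m → dist (some n : Option ℕ) (some m : Option ℕ) = 2) ∧
  -- a ↦ f_a maps bounded sequences into Lip₀(M) isometrically, and each f_a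
  -- attains its pointwise norm at the base point none
  (∀ a : ℕ → ℝ, (∃ C, ∀ n, |a n| ≤ C) →
    (∃ K, LipschitzWith K (fa a)) ∧ lipNorm (fa a) = (⨆ n, |a n|) ∧
      pnormAt (fa a) none = lipNorm (fa a)) ∧
  -- a ↦ f_a is onto Lip₀(M)
  (∀ f : Option ℕ → ℝ, f none = 0 → (∃ K, LipschitzWith K f) →
    (∃ C, ∀ n, |f (some n)| ≤ C) ∧ f = fa (fun n => f (some n))) ∧
  -- consequently PNA(M) = Lip₀(M)
  (∀ f : Option ℕ → ℝ, f none = 0 → (∃ K, LipschitzWith K f) → PointwiseAttains f)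

noncomputable def odist : Option ℕ → Option ℕ → ℝ := fun x y =>
  if x = y then 0 else if x = none ∨ y = none then 1 else 2

lemma odist_self (x : Option ℕ) : odist x x = 0 := by simp [odist]

lemma odist_comm (x y : Option ℕ) : odist x y = odist y x := by
  unfold odist
  by_cases h : x = y <;> simp [h, eq_comm, or_comm]

lemma odist_pos {x y : Option ℕ} (h : x ≠ y) : 1 ≤ odist x y := by
  unfold odist; split_ifs <;> norm_num
  · exact absurd ‹_› h

lemma odist_le_two (x y : Option ℕ) : odist x y ≤ 2 := by
  unfold odist; split_ifs <;> norm_num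

lemma odist_nonneg (x y : Option ℕ) : 0 ≤ odist x y := by
  unfold odist; split_ifs <;> norm_num

lemma odist_triangle (x y z : Option ℕ) : odist x z ≤ odist x y + odist y z := by
  by_cases hxz : x = z
  · subst hxz; rw [odist_self]; exact add_nonneg (odist_nonneg _ _) (odist_nonneg _ _)
  by_cases hxy : x = y
  · subst hxy; rw [odist_self]; linarith [odist_nonneg x x]
  by_cases hyz : y = z
  · subst hyz; rw [odist_self]; linarith [odist_nonneg y y]
  calc odist x z ≤ 2 := odist_le_two _ _
    _ ≤ odist x y + odist y z := by linarith [odist_pos hxy, odist_pos hyz]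

lemma odist_eq_zero {x y : Option ℕ} (h : odist x y = 0) : x = y := by
  by_contra hne
  linarith [odist_pos hne]

noncomputable def omet : MetricSpace (Option ℕ) :=
  letI : TopologicalSpace (Option ℕ) := ⊥
  haveI : DiscreteTopology (Option ℕ) := ⟨rfl⟩
  MetricSpace.ofDistTopology odist odist_self odist_comm odist_triangle
    (fun s => by
      constructor
      · intro _ x _
        refine ⟨1/2, by norm_num, fun y hy => ?_⟩
        rcases eq_or_ne x y with h | h
        · exact h ▸ ‹x ∈ s›
        · linarith [odist_pos h]
      · intro _; exact isOpen_discrete s)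
    (fun x y => odist_eq_zero)

section Main

attribute [local instance] omet

lemma odist_dist (x y : Option ℕ) : dist x y = odist x y := rfl

lemma dist_some_none (n : ℕ) : dist (some n : Option ℕ) none = 1 := by
  rw [odist_dist]; simp [odist]

lemma dist_none_some (n : ℕ) : dist (none : Option ℕ) (some n) = 1 := by
  rw [odist_dist]; simp [odist]

lemma dist_some_some {n m : ℕ} (h : n ≠ m) :
    dist (some n : Option ℕ) (some m) = 2 := by
  rw [odist_dist]; simp [odist, h]

variable {a : ℕ → ℝ} {C : ℝ}

lemma abs_le_iSup (hC : ∀ n, |a n| ≤ C) (n : ℕ) : |a n| ≤ ⨆ m, |a m| :=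
  le_ciSup ⟨C, Set.forall_mem_range.2 hC⟩ n

lemma ratio_le (hC : ∀ n, |a n| ≤ C) {p q : Option ℕ} (h : p ≠ q) :
    |fa a q - fa a p| / dist p q ≤ ⨆ m, |a m| := by
  have hS0 : 0 ≤ ⨆ m, |a m| := le_trans (abs_nonneg _) (abs_le_iSup hC 0)
  match p, q with
  | none, none => exact absurd rfl h
  | none, some n =>
    rw [dist_none_some]
    simpa [fa] using abs_le_iSup hC n
  | some n, none =>
    rw [dist_some_none]
    simpa [fa, abs_sub_comm] using abs_le_iSup hC n
  | some n, some m =>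
    have hnm : n ≠ m := fun e => h (by rw [e])
    rw [dist_some_some hnm]
    have h1 := abs_le_iSup hC n
    have h2 := abs_le_iSup hC m
    have := abs_sub (a m) (a n)
    show |a m - a n| / 2 ≤ _
    rw [div_le_iff₀ (by norm_num)]
    calc |a m - a n| ≤ |a m| + |a n| := abs_sub _ _
      _ ≤ (⨆ m, |a m|) * 2 := by linarith

lemma mem_lip_set (n : ℕ) :
    |a n| ∈ {r : ℝ | ∃ p q : Option ℕ, p ≠ q ∧ r = |fa a q - fa a p| / dist p q} := by
  exact ⟨none, some n, by simp, by simp [fa, dist_none_some]⟩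

lemma lipNorm_fa (hC : ∀ n, |a n| ≤ C) : lipNorm (fa a) = ⨆ n, |a n| := by
  apply le_antisymm
  · apply csSup_le ⟨|a 0|, mem_lip_set 0⟩
    rintro r ⟨p, q, h, rfl⟩
    exact ratio_le hC h
  · refine ciSup_le fun n => le_csSup ⟨⨆ m, |a m|, ?_⟩ (mem_lip_set n)
    rintro r ⟨p, q, h, rfl⟩
    exact ratio_le hC h

lemma pnorm_fa (hC : ∀ n, |a n| ≤ C) : pnormAt (fa a) none = ⨆ n, |a n| := by
  have hmem : ∀ n : ℕ, |a n| ∈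
      {r : ℝ | ∃ q : Option ℕ, q ≠ none ∧ r = |fa a q - fa a none| / dist none q} :=
    fun n => ⟨some n, by simp, by simp [fa, dist_none_some]⟩
  apply le_antisymm
  · apply csSup_le ⟨|a 0|, hmem 0⟩
    rintro r ⟨q, h, rfl⟩
    match q with
    | some n => simpa [fa, dist_none_some] using abs_le_iSup hC n
    | none => exact absurd rfl h
  · refine ciSup_le fun n => le_csSup ⟨⨆ m, |a m|, ?_⟩ (hmem n)
    rintro r ⟨q, h, rfl⟩
    match q with
    | some n => simpa [fa, dist_none_some] using abs_le_iSup hC n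
    | none => exact absurd rfl h

lemma lipschitz_fa (hC : ∀ n, |a n| ≤ C) :
    LipschitzWith (Real.toNNReal (2 * max C 0)) (fa a) := by
  apply LipschitzWith.of_dist_le_mul
  intro x y
  rcases eq_or_ne x y with rfl | h
  · simp
  have hK : (Real.toNNReal (2 * max C 0) : ℝ) = 2 * max C 0 :=
    Real.coe_toNNReal _ (by positivity)
  rw [Real.dist_eq, hK]
  have hb : ∀ z : Option ℕ, |fa a z| ≤ max C 0 := by
    rintro (_ | n)
    · simp [fa]
    · exact le_trans (hC n) (le_max_left _ _)
  calc |fa a x - fa a y| ≤ |fa a x| + |fa a y| := abs_sub _ _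
    _ ≤ 2 * max C 0 := by linarith [hb x, hb y]
    _ = 2 * max C 0 * 1 := (mul_one _).symm
    _ ≤ 2 * max C 0 * dist x y := by
        apply mul_le_mul_of_nonneg_left (odist_pos h) (by positivity)

end Main

section Thm
attribute [local instance] omet

/-- there is such a metric on M = {0} ∪ {pₙ}, for which
Lip₀(M) ≅ ℓ∞ isometrically via a ↦ f_a and PNA(M) = Lip₀(M). -/
theorem stmt3 : ∃ i : MetricSpace (Option ℕ), @stmt3Prop i := by
  refine ⟨omet, ?_⟩
  have onto : ∀ f : Option ℕ → ℝ, f none = 0 → (∃ K, LipschitzWith K f) →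
      (∃ C, ∀ n, |f (some n)| ≤ C) ∧ f = fa (fun n => f (some n)) := by
    rintro f hf0 ⟨K, hK⟩
    constructor
    · refine ⟨K, fun n => ?_⟩
      have := hK.dist_le_mul (some n) none
      rw [dist_some_none, Real.dist_eq, hf0, mul_one, sub_zero] at this
      exact this
    · funext x
      cases x with
      | none => simpa [fa] using hf0
      | some n => rfl
  refine ⟨dist_some_none, fun n m h => dist_some_some h, ?_, onto, ?_⟩
  · rintro a ⟨C, hC⟩
    exact ⟨⟨_, lipschitz_fa hC⟩, lipNorm_fa hC, (pnorm_fa hC).trans (lipNorm_fa hC).symm⟩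
  · rintro f hf0 hL
    obtain ⟨⟨C, hC⟩, hfa⟩ := onto f hf0 hL
    refine ⟨none, ?_⟩
    rw [hfa]
    exact (pnorm_fa hC).trans (lipNorm_fa hC).symm

end Thm
end

section
/- Let M = {0} ∪ {1/2^{n²} : n ∈ ℕ, n ≥ 1} ⊆ [0,1] with the metric inherited from ℝ and base point 0. Then every Lipschitz function f : M → ℝ with f(0) = 0 attains its pointwise norm, i.e., PNA(M) = Lip₀(M). -/
open Filter Metric MeasureTheory

namespace Stmt4Aux

abbrev M : Type := {x : ℝ // x = 0 ∨ ∃ n : ℕ, 1 ≤ n ∧ x = (1/2 : ℝ) ^ (n ^ 2)}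

def z : M := ⟨0, Or.inl rfl⟩

noncomputable def e (n : ℕ) : M :=
  if h : 1 ≤ n then ⟨(1/2 : ℝ) ^ (n ^ 2), Or.inr ⟨n, h, rfl⟩⟩ else z

lemma e_zero : e 0 = z := rfl

lemma e_val (n : ℕ) (h : 1 ≤ n) : (e n).1 = (1/2:ℝ)^(n^2) := by simp [e, h]

lemma e_surj (p : M) : ∃ n, p = e n := by
  rcases p.2 with h | ⟨n, hn, h⟩
  · exact ⟨0, Subtype.ext (by simpa [e, z] using h)⟩
  · exact ⟨n, Subtype.ext (by simp [e, hn, h])⟩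

lemma dist_eq' (p q : M) : dist p q = |p.1 - q.1| := by
  rw [Subtype.dist_eq, Real.dist_eq]

lemma pow_half_pos (k : ℕ) : (0:ℝ) < (1/2)^k := by positivity

lemma pow_half_lt {m n : ℕ} (h : m < n) : (1/2:ℝ)^n < (1/2)^m := by
  apply pow_lt_pow_right_of_lt_one₀ <;> norm_num [h]

lemma pow_half_le {m n : ℕ} (h : m ≤ n) : (1/2:ℝ)^n ≤ (1/2)^m := by
  rcases h.lt_or_eq with h | rfl
  · exact (pow_half_lt h).le
  · rfl

lemma e_ne_z {n : ℕ} (h : 1 ≤ n) : e n ≠ z := by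
  intro hc
  have := congrArg Subtype.val hc
  rw [e_val n h] at this
  exact absurd this (by positivity)

lemma dist_z_e (n : ℕ) (h : 1 ≤ n) : dist z (e n) = (1/2:ℝ)^(n^2) := by
  rw [dist_eq', e_val n h]
  simp [z, abs_of_nonpos, (pow_half_pos (n^2)).le]

lemma dist_e_e {m n : ℕ} (hm : 1 ≤ m) (hmn : m < n) :
    dist (e m) (e n) = (1/2:ℝ)^(m^2) - (1/2:ℝ)^(n^2) := by
  have h2 : m^2 < n^2 := Nat.pow_lt_pow_left hmn (by norm_num)
  rw [dist_eq', e_val m hm, e_val n (hm.trans hmn.le),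
    abs_of_pos (by linarith [pow_half_lt h2])]

end Stmt4Aux

open Stmt4Aux in

/-- on M = {0} ∪ {1/2^(n²) : n ≥ 1} every Lipschitz function vanishing
at 0 attains its pointwise norm. -/
theorem stmt4
    (f : {x : ℝ // x = 0 ∨ ∃ n : ℕ, 1 ≤ n ∧ x = (1/2 : ℝ) ^ (n ^ 2)} → ℝ)
    (h0 : f ⟨0, Or.inl rfl⟩ = 0) (hlip : ∃ K, LipschitzWith K f) :
    PointwiseAttains f := by
  classical
  obtain ⟨K, hK⟩ := hlip
  have h0' : f z = 0 := h0
  set S : Set ℝ := {r : ℝ | ∃ p q : M, p ≠ q ∧ r = |f q - f p| / dist p q} with hS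
  have hlipS : lipNorm f = sSup S := rfl
  -- upper bound
  have hub : ∀ r ∈ S, r ≤ (K : ℝ) := by
    rintro r ⟨p, q, hpq, rfl⟩
    have hd : 0 < dist p q := dist_pos.mpr hpq
    rw [div_le_iff₀ hd]
    have := hK.dist_le_mul p q
    rwa [Real.dist_eq, abs_sub_comm] at this
  have hbddS : BddAbove S := ⟨K, hub⟩
  have hmemS : ∀ (p q : M), p ≠ q → |f q - f p| / dist p q ∈ S :=
    fun p q h => ⟨p, q, h, rfl⟩
  have hneS : S.Nonempty := ⟨_, hmemS z (e 1) (e_ne_z le_rfl).symm⟩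
  -- pointwise sets
  have hSp : ∀ p : M, {r : ℝ | ∃ q : M, q ≠ p ∧ r = |f q - f p| / dist p q} ⊆ S := by
    rintro p r ⟨q, hq, rfl⟩
    exact hmemS p q hq.symm
  have hpnorm_le : ∀ p q : M, q ≠ p → pnormAt f p ≤ lipNorm f := by
    intro p q hq
    exact csSup_le_csSup hbddS ⟨_, ⟨q, hq, rfl⟩⟩ (hSp p)
  set s := pnormAt f z with hsdef
  have hsSup : s = sSup {r : ℝ | ∃ q : M, q ≠ z ∧ r = |f q - f z| / dist z q} := rfl
  have hbddSz : BddAbove {r : ℝ | ∃ q : M, q ≠ z ∧ r = |f q - f z| / dist z q} :=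
    hbddS.mono (hSp z)
  -- slopes at 0 are ≤ s
  have hsz : ∀ q : M, q ≠ z → |f q - f z| / dist z q ≤ s :=
    fun q hq => le_csSup hbddSz ⟨q, hq, rfl⟩
  have hs0 : 0 ≤ s :=
    le_trans (by positivity) (hsz (e 1) (e_ne_z le_rfl))
  have hfe : ∀ n : ℕ, 1 ≤ n → |f (e n)| ≤ s * (1/2:ℝ)^(n^2) := by
    intro n hn
    have := hsz (e n) (e_ne_z hn)
    rw [h0', sub_zero, dist_z_e n hn, div_le_iff₀ (pow_half_pos _)] at this
    linarith [this]
  rcases le_or_gt (lipNorm f) s with hcase | hcase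
  · exact ⟨z, le_antisymm (hpnorm_le z (e 1) (e_ne_z le_rfl)) hcase⟩
  -- case s < L
  set L := lipNorm f with hL
  have hLpos : 0 < L := lt_of_le_of_lt hs0 hcase
  set δ : ℝ := (L - s) / (2 * (L + s)) with hδdef
  have hLs : 0 < L + s := by linarith
  have hδeq : δ * (2 * (L + s)) = L - s := div_mul_cancel₀ _ (by linarith)
  have hδ0 : 0 < δ := div_pos (by linarith) (by linarith)
  have hδ1 : δ < 1 := by nlinarith
  set T : ℝ := s * (1 + δ) / (1 - δ) with hTdef
  have h1δ : 0 < 1 - δ := by linarith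
  have hTL : T < L := by
    rw [hTdef, div_lt_iff₀ h1δ]; nlinarith
  have hsT : s ≤ T := by
    rw [hTdef, le_div_iff₀ h1δ]; nlinarith
  -- far pairs have slope ≤ T
  have hfar : ∀ m n : ℕ, 1 ≤ m → m < n → (1/2:ℝ)^(n^2) ≤ δ * (1/2:ℝ)^(m^2) →
      |f (e n) - f (e m)| / dist (e m) (e n) ≤ T := by
    intro m n hm hmn hb
    have hn : 1 ≤ n := hm.trans hmn.le
    have h2 : m^2 < n^2 := Nat.pow_lt_pow_left hmn (by norm_num)
    have hba : (1/2:ℝ)^(n^2) < (1/2:ℝ)^(m^2) := pow_half_lt h2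
    have hbpos := pow_half_pos (n^2)
    have h1 : |f (e n) - f (e m)| ≤ s * (1/2:ℝ)^(n^2) + s * (1/2:ℝ)^(m^2) :=
      (abs_sub _ _).trans (add_le_add (hfe n hn) (hfe m hm))
    rw [dist_e_e hm hmn, hTdef, div_le_div_iff₀ (by linarith) h1δ]
    nlinarith [mul_le_mul_of_nonneg_right h1 h1δ.le]
  -- choose C
  obtain ⟨C, hC⟩ := exists_pow_lt_of_lt_one hδ0 (by norm_num : (1/2:ℝ) < 1)
  -- big slopes force small indices
  have hbig : ∀ m n : ℕ, 1 ≤ m → m < n →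
      T < |f (e n) - f (e m)| / dist (e m) (e n) → m + n < C := by
    intro m n hm hmn hr
    by_contra hge
    push_neg at hge
    have h2 : m^2 + (m + n) ≤ n^2 := by nlinarith
    have hb : (1/2:ℝ)^(n^2) ≤ δ * (1/2:ℝ)^(m^2) := by
      calc (1/2:ℝ)^(n^2) ≤ (1/2:ℝ)^(m^2 + (m+n)) := pow_half_le h2
        _ = (1/2:ℝ)^(m+n) * (1/2:ℝ)^(m^2) := by rw [pow_add]; ring
        _ ≤ δ * (1/2:ℝ)^(m^2) := by
            apply mul_le_mul_of_nonneg_right _ (pow_half_pos _).le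
            exact le_trans (pow_half_le hge) hC.le
    exact absurd (hfar m n hm hmn hb) (not_le.mpr hr)
  have hsym : ∀ p q : M, |f q - f p| / dist p q = |f p - f q| / dist q p := by
    intro p q; rw [abs_sub_comm, dist_comm]
  -- slopes through z are ≤ T
  have hzslope : ∀ q : M, q ≠ z → |f q - f z| / dist z q ≤ T :=
    fun q hq => (hsz q hq).trans hsT
  -- the big-slope set is finite
  set Fs : Finset ℝ := ((Finset.range (C+1)) ×ˢ (Finset.range (C+1))).image
    (fun mn : ℕ × ℕ => |f (e mn.2) - f (e mn.1)| / dist (e mn.1) (e mn.2)) with hFs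
  have hsub : {r ∈ S | T < r} ⊆ ↑Fs := by
    rintro r ⟨⟨p, q, hpq, rfl⟩, hr⟩
    obtain ⟨m, rfl⟩ := e_surj p
    obtain ⟨n, rfl⟩ := e_surj q
    have hm : 1 ≤ m := by
      rcases Nat.eq_zero_or_pos m with rfl | h
      · rw [e_zero] at hr hpq
        exact absurd (hzslope _ (Ne.symm hpq)) (not_le.mpr hr)
      · exact h
    have hn : 1 ≤ n := by
      rcases Nat.eq_zero_or_pos n with rfl | h
      · rw [e_zero, hsym] at hr
        rw [e_zero] at hpq
        exact absurd (hzslope _ hpq) (not_le.mpr hr)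
      · exact h
    have hmn : m ≠ n := fun h => hpq (by rw [h])
    have hmnC : m + n < C := by
      rcases hmn.lt_or_gt with h | h
      · exact hbig m n hm h hr
      · rw [hsym] at hr
        have := hbig n m hn h hr
        omega
    simp only [hFs, Finset.coe_image, Set.mem_image, Finset.mem_coe,
      Finset.mem_product, Finset.mem_range]
    exact ⟨(m, n), by constructor <;> [skip; rfl]; exact ⟨by omega, by omega⟩⟩
  have hFin : {r ∈ S | T < r}.Finite := Set.Finite.subset (Fs.finite_toSet) hsub
  have hne2 : {r ∈ S | T < r}.Nonempty := by
    by_contra hemp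
    rw [Set.not_nonempty_iff_eq_empty] at hemp
    have hle : ∀ r ∈ S, r ≤ T := by
      intro r hr
      by_contra h'
      exact absurd (Set.mem_setOf.mpr ⟨hr, not_le.mp h'⟩ : r ∈ {r ∈ S | T < r})
        (by rw [hemp]; exact Set.notMem_empty r)
    have : L ≤ T := csSup_le hneS hle
    linarith
  set F : Finset ℝ := hFin.toFinset with hFdef
  have hFne : F.Nonempty := by
    rwa [hFdef, Set.Finite.toFinset_nonempty]
  set r₀ := F.max' hFne with hr₀def
  have hr₀mem : r₀ ∈ {r ∈ S | T < r} :=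
    (Set.Finite.mem_toFinset hFin).mp (F.max'_mem hFne)
  obtain ⟨hr₀S, hr₀T⟩ := hr₀mem
  have hmax : ∀ r ∈ {r ∈ S | T < r}, r ≤ r₀ := by
    intro r hr
    exact F.le_max' r ((Set.Finite.mem_toFinset hFin).mpr hr)
  have hr₀L : r₀ ≤ L := le_csSup hbddS hr₀S
  have hLr₀ : L ≤ r₀ := by
    apply csSup_le hneS
    intro r hr
    by_cases h' : T < r
    · exact hmax r ⟨hr, h'⟩
    · linarith [not_lt.mp h']
  obtain ⟨p, q, hpq, heq⟩ := hr₀S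
  refine ⟨p, le_antisymm (hpnorm_le p q (Ne.symm hpq)) ?_⟩
  have : r₀ ≤ pnormAt f p :=
    le_csSup (hbddS.mono (hSp p)) ⟨q, Ne.symm hpq, heq⟩
  linarith
end

section
/- There exists a Lipschitz function g : [0,1] → ℝ with g(0) = 0 and Lipschitz constant ‖g‖ = 1 which does not attain its pointwise norm: for every p ∈ (0,1] one has sup_{q≠p} |g(q)-g(p)|/|q-p| < 1, and sup_{q≠0} |g(q)-g(0)|/q < 1. Consequently PNA([0,1]) ≠ Lip₀([0,1]). -/
/-!
The function `logOsc` vanishes at `0` and has derivative `(1 - x) sin (log x)` on `(0, 1]`.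
Comparing it with `x - x² / 2`, whose derivative is `1 - x`, gives
`|logOsc b - logOsc a| ≤ (b - a) (1 - (a + b) / 2)`, so every slope at a point `p > 0` is at most
`1 - p / 2`, while `|logOsc x| ≤ 3x / 4` bounds the slopes at `0`. Yet the derivative equals
`1 - x` at the points `x = exp (π / 2 - 2πn) → 0`, so the Lipschitz constant is `1`.
-/

open Filter Metric MeasureTheory

open Real Set Topology

section Norms

variable {M : Type*} [MetricSpace M] {f : M → ℝ}

theorem LipschitzWith.abs_sub_div_dist_le {K : NNReal} (hf : LipschitzWith K f) {p q : M}
    (hpq : p ≠ q) : |f q - f p| / dist p q ≤ K := by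
  rw [div_le_iff₀ (dist_pos.2 hpq), ← Real.dist_eq, dist_comm]
  exact hf.dist_le_mul p q

theorem lipNorm_le_of_lipschitzWith {K : NNReal} (hf : LipschitzWith K f) : lipNorm f ≤ K := by
  refine Real.sSup_le ?_ K.coe_nonneg
  rintro r ⟨p, q, hpq, rfl⟩
  exact hf.abs_sub_div_dist_le hpq

theorem abs_sub_div_dist_le_lipNorm {K : NNReal} (hf : LipschitzWith K f) {p q : M}
    (hpq : p ≠ q) : |f q - f p| / dist p q ≤ lipNorm f := by
  refine le_csSup ⟨K, ?_⟩ ⟨p, q, hpq, rfl⟩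
  rintro r ⟨p, q, hpq, rfl⟩
  exact hf.abs_sub_div_dist_le hpq

theorem pnormAt_le {p : M} {c : ℝ} (hc : 0 ≤ c) (h : ∀ q, q ≠ p → |f q - f p| ≤ c * dist p q) :
    pnormAt f p ≤ c := by
  refine Real.sSup_le ?_ hc
  rintro r ⟨q, hqp, rfl⟩
  exact div_le_of_le_mul₀ dist_nonneg hc (h q hqp)

end Norms

theorem abs_hasDerivAt_le_lipNorm_domRestrict {F : ℝ → ℝ} {F' x : ℝ} {s : Set ℝ} {K : NNReal}
    (hF : LipschitzWith K (s.domRestrict F)) (hs : s ∈ 𝓝 x) (hF' : HasDerivAt F F' x) :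
    |F'| ≤ lipNorm (s.domRestrict F) := by
  have hslope : Tendsto (fun y => |slope F x y|) (𝓝[≠] x) (𝓝 |F'|) :=
    (hasDerivAt_iff_tendsto_slope.1 hF').abs
  refine le_of_tendsto hslope ?_
  filter_upwards [nhdsWithin_le_nhds hs, self_mem_nhdsWithin] with y hy hyx
  have hne : (⟨x, mem_of_mem_nhds hs⟩ : s) ≠ ⟨y, hy⟩ := fun h => hyx (congrArg Subtype.val h).symm
  refine le_of_eq_of_le ?_ (abs_sub_div_dist_le_lipNorm hF hne)
  rw [slope_def_field, abs_div, Subtype.dist_eq, Real.dist_eq, abs_sub_comm x y]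
  rfl

theorem abs_sub_le_sub_of_abs_deriv_le {f g f' g' : ℝ → ℝ} {a b : ℝ} (hab : a ≤ b)
    (hf : ContinuousOn f (Icc a b)) (hg : ContinuousOn g (Icc a b))
    (hf' : ∀ x ∈ Ioo a b, HasDerivAt f (f' x) x) (hg' : ∀ x ∈ Ioo a b, HasDerivAt g (g' x) x)
    (hle : ∀ x ∈ Ioo a b, |f' x| ≤ g' x) : |f b - f a| ≤ g b - g a := by
  have mono : ∀ σ : ℝ, |σ| = 1 → MonotoneOn (fun x => g x - σ * f x) (Icc a b) := by
    intro σ hσ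
    refine monotoneOn_of_hasDerivWithinAt_nonneg (convex_Icc a b) (hg.sub (hf.const_smul σ))
      (f' := fun x => g' x - σ * f' x) (fun x hx => ?_) (fun x hx => ?_)
    · rw [interior_Icc] at hx
      exact ((hg' x hx).sub ((hf' x hx).const_mul σ)).hasDerivWithinAt
    · rw [interior_Icc] at hx
      have hσf : σ * f' x ≤ |f' x| := by
        calc σ * f' x ≤ |σ * f' x| := le_abs_self _
          _ = |f' x| := by rw [abs_mul, hσ, one_mul]
      linarith [hle x hx]
  have hA := mono 1 abs_one (left_mem_Icc.2 hab) (right_mem_Icc.2 hab) hab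
  have hB := mono (-1) (by simp) (left_mem_Icc.2 hab) (right_mem_Icc.2 hab) hab
  simp only at hA hB
  rw [abs_le]
  constructor <;> linarith

noncomputable def logOsc (x : ℝ) : ℝ :=
  x * ((1 / 2 - 2 / 5 * x) * sin (log x) + (x / 5 - 1 / 2) * cos (log x))

theorem logOsc_zero : logOsc 0 = 0 := by simp [logOsc]

theorem hasDerivAt_logOsc {x : ℝ} (hx : 0 < x) :
    HasDerivAt logOsc ((1 - x) * sin (log x)) x := by
  have hlog : HasDerivAt log x⁻¹ x := hasDerivAt_log hx.ne'
  have hA := ((hasDerivAt_id' x).const_mul (2 / 5 : ℝ)).const_sub (1 / 2 : ℝ)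
  have hB := ((hasDerivAt_id' x).div_const (5 : ℝ)).sub_const (1 / 2 : ℝ)
  refine ((hasDerivAt_id' x).mul ((hA.mul hlog.sin).add (hB.mul hlog.cos))).congr_deriv ?_
  simp only [Pi.mul_apply, Pi.add_apply]
  field_simp
  ring

theorem abs_logOsc_le {x : ℝ} (hx₀ : 0 ≤ x) (hx₁ : x ≤ 1) : |logOsc x| ≤ 3 / 4 * x := by
  set s := sin (log x)
  set c := cos (log x)
  have hsc : s ^ 2 + c ^ 2 = 1 := sin_sq_add_cos_sq _
  -- Cauchy–Schwarz, with `(1/2 - 2x/5)² + (x/5 - 1/2)² ≤ 1/2 < (3/4)²` on `[0, 1]`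
  have hsq : ((1 / 2 - 2 / 5 * x) * s + (x / 5 - 1 / 2) * c) ^ 2 ≤ (3 / 4) ^ 2 := by
    have hcs : ((1 / 2 - 2 / 5 * x) * s + (x / 5 - 1 / 2) * c) ^ 2
        + ((1 / 2 - 2 / 5 * x) * c - (x / 5 - 1 / 2) * s) ^ 2
        = (1 / 2 - 2 / 5 * x) ^ 2 + (x / 5 - 1 / 2) ^ 2 := by
      linear_combination ((1 / 2 - 2 / 5 * x) ^ 2 + (x / 5 - 1 / 2) ^ 2) * hsc
    nlinarith [sq_nonneg ((1 / 2 - 2 / 5 * x) * c - (x / 5 - 1 / 2) * s)]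
  rw [logOsc, abs_mul, abs_of_nonneg hx₀, mul_comm]
  exact mul_le_mul_of_nonneg_right (abs_le_of_sq_le_sq hsq (by norm_num)) hx₀

theorem continuousOn_logOsc : ContinuousOn logOsc (Icc 0 1) := by
  intro x hx
  rcases hx.1.eq_or_lt with rfl | hx₀
  · have hbound : ∀ᶠ y in 𝓝[Icc 0 1] 0, ‖logOsc y‖ ≤ 3 / 4 * y :=
      eventually_nhdsWithin_of_forall fun y hy => abs_logOsc_le hy.1 hy.2
    have hlin : Tendsto (fun y : ℝ => 3 / 4 * y) (𝓝[Icc 0 1] 0) (𝓝 0) := by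
      simpa using ((continuous_const_mul (3 / 4 : ℝ)).tendsto 0).mono_left nhdsWithin_le_nhds
    rw [ContinuousWithinAt, logOsc_zero]
    exact squeeze_zero_norm' hbound hlin
  · exact (hasDerivAt_logOsc hx₀).continuousAt.continuousWithinAt

theorem abs_logOsc_sub_le {a b : ℝ} (ha : 0 ≤ a) (hab : a ≤ b) (hb : b ≤ 1) :
    |logOsc b - logOsc a| ≤ (b - a) * (1 - (a + b) / 2) := by
  have hsub : Icc a b ⊆ Icc 0 1 := Icc_subset_Icc ha hb
  have key := abs_sub_le_sub_of_abs_deriv_le hab (continuousOn_logOsc.mono hsub)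
    (g := fun x => x - x ^ 2 / 2) (g' := fun x => 1 - x) (by fun_prop)
    (fun x hx => hasDerivAt_logOsc (ha.trans_lt hx.1))
    (fun x _ => ((hasDerivAt_id x).sub ((hasDerivAt_pow 2 x).div_const 2)).congr_deriv
      (by norm_num))
    (fun x hx => ?_)
  · convert key using 1
    ring
  · rw [abs_mul, abs_of_nonneg (by linarith [hx.2] : 0 ≤ 1 - x)]
    exact mul_le_of_le_one_right (by linarith [hx.2]) (abs_sin_le_one _)

theorem abs_logOsc_sub_le_mul {p q : ℝ} (hp : p ∈ Icc (0 : ℝ) 1) (hq : q ∈ Icc (0 : ℝ) 1) :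
    |logOsc q - logOsc p| ≤ (1 - p / 2) * |q - p| := by
  rcases le_total p q with hpq | hqp
  · rw [abs_of_nonneg (sub_nonneg.2 hpq)]
    nlinarith [abs_logOsc_sub_le hp.1 hpq hq.2, mul_nonneg (sub_nonneg.2 hpq) hq.1]
  · rw [abs_sub_comm (logOsc q), abs_sub_comm q, abs_of_nonneg (sub_nonneg.2 hqp)]
    nlinarith [abs_logOsc_sub_le hq.1 hqp hp.2, mul_nonneg (sub_nonneg.2 hqp) hq.1]

theorem tendsto_exp_pi_div_two_sub : Tendsto (fun n : ℕ => exp (π / 2 - 2 * π * n)) atTop (𝓝 0) :=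
  tendsto_exp_atBot.comp <| tendsto_atBot_add_const_left _ _ <|
    tendsto_neg_atTop_atBot.comp (tendsto_natCast_atTop_atTop.const_mul_atTop (by positivity))

theorem lipschitzWith_domRestrict_logOsc : LipschitzWith 1 ((Icc (0 : ℝ) 1).domRestrict logOsc) :=
  LipschitzWith.of_dist_le_mul fun p q => by
    rw [NNReal.coe_one, one_mul, Real.dist_eq, Subtype.dist_eq, Real.dist_eq]
    calc |logOsc p - logOsc q| ≤ (1 - q / 2) * |(p : ℝ) - q| := abs_logOsc_sub_le_mul q.2 p.2
      _ ≤ |(p : ℝ) - q| := mul_le_of_le_one_left (abs_nonneg _) (by linarith [q.2.1])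

theorem one_le_lipNorm_logOsc : 1 ≤ lipNorm ((Icc (0 : ℝ) 1).domRestrict logOsc) := by
  have hlim := tendsto_exp_pi_div_two_sub
  refine le_of_tendsto (by simpa using tendsto_const_nhds.sub hlim) ?_
  filter_upwards [hlim.eventually (gt_mem_nhds one_pos)] with n hn₁
  have hn₀ : 0 < exp (π / 2 - 2 * π * n) := exp_pos _
  have hsin : sin (log (exp (π / 2 - 2 * π * n))) = 1 := by
    rw [log_exp, show 2 * π * n = n * (2 * π) by ring, sin_sub_nat_mul_two_pi, sin_pi_div_two]
  have h := abs_hasDerivAt_le_lipNorm_domRestrict lipschitzWith_domRestrict_logOsc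
    (Icc_mem_nhds hn₀ hn₁) (hasDerivAt_logOsc hn₀)
  rwa [hsin, mul_one, abs_of_pos (by linarith)] at h

theorem pnormAt_logOsc_lt_one (p : Icc (0 : ℝ) 1) :
    pnormAt ((Icc (0 : ℝ) 1).domRestrict logOsc) p < 1 := by
  obtain ⟨p, hp⟩ := p
  rcases hp.1.eq_or_lt with rfl | hp₀
  · refine (pnormAt_le (c := 3 / 4) (by norm_num) fun q _ => ?_).trans_lt (by norm_num)
    rw [Subtype.dist_eq, Real.dist_eq, zero_sub, abs_neg, abs_of_nonneg q.2.1]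
    simpa [logOsc_zero] using abs_logOsc_le q.2.1 q.2.2
  · refine (pnormAt_le (c := 1 - p / 2) (by linarith [hp.2]) fun q _ => ?_).trans_lt (by linarith)
    rw [Subtype.dist_eq, Real.dist_eq, abs_sub_comm p]
    exact abs_logOsc_sub_le_mul hp q.2

/-- there is a norm-one Lipschitz function on [0,1] vanishing at 0
which does not attain its pointwise norm at any point. -/
theorem stmt5 : ∃ g : (Set.Icc (0:ℝ) 1) → ℝ,
    g ⟨0, by norm_num⟩ = 0 ∧ LipschitzWith 1 g ∧ lipNorm g = 1 ∧
    (∀ p : (Set.Icc (0:ℝ) 1), pnormAt g p < 1) ∧ ¬ PointwiseAttains g := by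
  have hnorm : lipNorm ((Icc (0 : ℝ) 1).domRestrict logOsc) = 1 :=
    (lipNorm_le_of_lipschitzWith lipschitzWith_domRestrict_logOsc).antisymm one_le_lipNorm_logOsc
  refine ⟨(Icc (0 : ℝ) 1).domRestrict logOsc, logOsc_zero, lipschitzWith_domRestrict_logOsc,
    hnorm, pnormAt_logOsc_lt_one, ?_⟩
  rintro ⟨p, hp⟩
  exact (pnormAt_logOsc_lt_one p).ne (hp.trans hnorm)
end

section
/- Let M = {pₙ : n ∈ ℕ} be a countable pointed metric space with p₁ = 0 and d(p,q) = 1 for all distinct p,q. Then the set PNA(M) of pointwise norm-attaining Lipschitz functions does not contain an isometric copy of ℓ₁: there is no sequence (gₙ) in PNA(M) such that ‖Σ finite bₙ gₙ‖ = Σ |bₙ| for all real coefficients and all countable ℓ₁-combinations Σₙ aₙ gₙ (with (aₙ) ∈ ℓ₁) lie in PNA(M). -/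
open Filter Metric MeasureTheory

/-- If the Lipschitz norm is a positive number `c`, then all increments are bounded by `c`
(in a 0-1 discrete metric space). -/
lemma lipNorm_bound_aux {M : Type*} [MetricSpace M] (hd : ∀ p q : M, p ≠ q → dist p q = 1)
    {f : M → ℝ} {c : ℝ} (hc : 0 < c) (hl : lipNorm f = c) :
    ∀ p q : M, |f q - f p| ≤ c := by
  simp only [lipNorm] at hl
  by_cases hB : BddAbove {r : ℝ | ∃ p q : M, p ≠ q ∧ r = |f q - f p| / dist p q}
  · intro p q
    rcases eq_or_ne p q with h | h
    · subst h; simpa using hc.le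
    · have hmem : |f q - f p| / dist p q ∈
          {r : ℝ | ∃ p q : M, p ≠ q ∧ r = |f q - f p| / dist p q} := ⟨p, q, h, rfl⟩
      have hle := le_csSup hB hmem
      rw [hd p q h, div_one] at hle
      linarith
  · rw [Real.sSup_of_not_bddAbove hB] at hl
    linarith

/-- Approximate attainment at a point from `pnormAt`. -/
lemma pnormAt_approx {M : Type*} [MetricSpace M] [Infinite M]
    (hd : ∀ p q : M, p ≠ q → dist p q = 1) {f : M → ℝ} {c : ℝ} {p : M}
    (h : pnormAt f p = c) : ∀ ε > 0, ∃ q : M, q ≠ p ∧ |f q - f p| > c - ε := by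
  intro ε hε
  simp only [pnormAt] at h
  obtain ⟨q0, hq0⟩ := exists_ne p
  have hne : {r : ℝ | ∃ q : M, q ≠ p ∧ r = |f q - f p| / dist p q}.Nonempty :=
    ⟨_, q0, hq0, rfl⟩
  have hlt : c - ε < sSup {r : ℝ | ∃ q : M, q ≠ p ∧ r = |f q - f p| / dist p q} := by
    rw [h]; linarith
  obtain ⟨r, ⟨q, hqp, hr⟩, hgt⟩ := exists_lt_of_lt_csSup hne hlt
  refine ⟨q, hqp, ?_⟩
  rw [hr, hd p q (Ne.symm hqp), div_one] at hgt
  exact hgt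

/-- Either `f` has a "deep descent" at `p` or `-f` does. -/
lemma deep_or {M : Type*} {f : M → ℝ} {c : ℝ} {p : M}
    (hpn : ∀ ε > 0, ∃ q : M, q ≠ p ∧ |f q - f p| > c - ε) :
    (∀ ε > 0, ∃ q : M, f p - f q > c - ε) ∨ (∀ ε > 0, ∃ q : M, f q - f p > c - ε) := by
  by_cases h : ∀ ε > 0, ∃ q : M, f p - f q > c - ε
  · exact Or.inl h
  · right
    push_neg at h
    obtain ⟨ε0, hε0, hall⟩ := h
    intro ε hε
    obtain ⟨q, _, hq⟩ := hpn (min ε ε0) (lt_min hε hε0)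
    have h1 : f p - f q ≤ c - ε0 := hall q
    have hmin1 : min ε ε0 ≤ ε := min_le_left _ _
    have hmin2 : min ε ε0 ≤ ε0 := min_le_right _ _
    rcases abs_cases (f q - f p) with ⟨he, _⟩ | ⟨he, _⟩
    · exact ⟨q, by linarith⟩
    · exfalso; linarith

/-- The core quantitative contradiction. -/
lemma core_contradiction {M : Type*} {f h w u : M → ℝ} {p : M} {α β : ℝ}
    (hβ : 0 < β) (hαβ : α + β = 2)
    (hfwu : ∀ x, f x = w x + u x) (hhwu : ∀ x, h x = w x - u x)
    (hw : ∀ x y : M, |w x - w y| ≤ α) (hu : ∀ x y : M, |u x - u y| ≤ β)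
    (df : ∀ ε > 0, ∃ q : M, f p - f q > 2 - ε)
    (dh : ∀ ε > 0, ∃ q : M, h p - h q > 2 - ε) : False := by
  obtain ⟨q1, h1⟩ := df (β / 2) (by linarith)
  obtain ⟨q2, h2⟩ := dh (β / 2) (by linarith)
  have b1 : w p - w q1 ≤ α := (le_abs_self _).trans (hw p q1)
  have b2 : w p - w q2 ≤ α := (le_abs_self _).trans (hw p q2)
  have b3 : u q2 - u q1 ≤ β := (le_abs_self _).trans (hu q2 q1)
  rw [hfwu p, hfwu q1] at h1
  rw [hhwu p, hhwu q2] at h2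
  linarith

/-- Sign coefficient sequence. -/
noncomputable def chiSgn (s : ℕ → Bool) (n : ℕ) : ℝ :=
  (if s n then 1 else -1) * (1 / 2) ^ n

lemma chiSgn_abs (s : ℕ → Bool) (n : ℕ) : |chiSgn s n| = (1 / 2) ^ n := by
  unfold chiSgn
  rw [abs_mul]
  have h1 : |(if s n then (1 : ℝ) else -1)| = 1 := by
    by_cases h : s n <;> simp [h]
  rw [h1, one_mul, abs_of_nonneg (by positivity)]

lemma chiSgn_summable (s : ℕ → Bool) : Summable (fun n => |chiSgn s n|) := by
  apply (summable_geometric_of_lt_one (by norm_num : (0:ℝ) ≤ 1/2) (by norm_num)).congr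
  intro n; rw [chiSgn_abs]

lemma chiSgn_tsum (s : ℕ → Bool) : (∑' n, |chiSgn s n|) = 2 := by
  rw [tsum_congr (chiSgn_abs s), tsum_geometric_of_lt_one (by norm_num) (by norm_num)]
  norm_num

lemma chiSgn_ne_zero (s : ℕ → Bool) : chiSgn s ≠ 0 := by
  intro h
  have := congrFun h 0
  unfold chiSgn at this
  by_cases hb : s 0 <;> simp [hb] at this

lemma chiSgn_true {s : ℕ → Bool} {n : ℕ} (h : s n = true) : chiSgn s n = (1/2)^n := by
  unfold chiSgn; rw [h]; simp

lemma chiSgn_false {s : ℕ → Bool} {n : ℕ} (h : s n = false) : chiSgn s n = -(1/2)^n := by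
  unfold chiSgn; rw [h]; simp

lemma chiSgn_not (s : ℕ → Bool) (n : ℕ) : chiSgn (fun k => !s k) n = -chiSgn s n := by
  cases hb : s n
  · rw [chiSgn_false hb, chiSgn_true (by simp [hb]), neg_neg]
  · rw [chiSgn_true hb, chiSgn_false (by simp [hb])]

/-- for a countably infinite discrete (0–1) metric space M, the set
PNA(M) contains no isometric copy of ℓ₁. -/
theorem stmt7 {M : Type*} [MetricSpace M] [Countable M] [Infinite M] (z : M)
    (hd : ∀ p q : M, p ≠ q → dist p q = 1) :
    ¬ ∃ g : ℕ → M → ℝ, (∀ n, g n z = 0) ∧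
      ∀ a : ℕ → ℝ, Summable (fun n => |a n|) → a ≠ 0 →
        lipNorm (fun x => ∑' n, a n * g n x) = (∑' n, |a n|) ∧
        PointwiseAttains (fun x => ∑' n, a n * g n x) := by
  classical
  rintro ⟨g, hz, H⟩
  -- Step 1: each g n is bounded by 1.
  have gbound : ∀ (n : ℕ) (x : M), |g n x| ≤ 1 := by
    intro n x
    have habs : (fun k => |if k = n then (1:ℝ) else 0|) = fun k => if k = n then 1 else 0 := by
      funext k; by_cases h : k = n <;> simp [h]
    have hsum : Summable (fun k => |if k = n then (1:ℝ) else 0|) := by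
      rw [habs]; exact ⟨_, hasSum_ite_eq n 1⟩
    have hne : (fun k => if k = n then (1:ℝ) else 0) ≠ 0 := by
      intro h; have := congrFun h n; simp at this
    obtain ⟨hlip, _⟩ := H _ hsum hne
    have hfun : (fun x : M => ∑' k, (if k = n then (1:ℝ) else 0) * g k x) = g n := by
      funext y
      have : (fun k => (if k = n then (1:ℝ) else 0) * g k y)
          = fun k => if k = n then g n y else 0 := by
        funext k; by_cases h : k = n <;> simp [h]
      rw [this, tsum_ite_eq]
    have htsum : (∑' k, |if k = n then (1:ℝ) else 0|) = 1 := by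
      rw [habs, tsum_ite_eq]
    rw [hfun, htsum] at hlip
    have := lipNorm_bound_aux hd one_pos hlip z x
    rwa [hz n, sub_zero] at this
  -- Step 2: summability of the series defining the functions.
  have gsum : ∀ (a : ℕ → ℝ), Summable (fun n => |a n|) → ∀ x : M,
      Summable (fun n => a n * g n x) := by
    intro a ha x
    apply Summable.of_abs
    apply Summable.of_nonneg_of_le (fun n => abs_nonneg _) _ ha
    intro n
    rw [abs_mul]
    calc |a n| * |g n x| ≤ |a n| * 1 :=
          mul_le_mul_of_nonneg_left (gbound n x) (abs_nonneg _)
      _ = |a n| := mul_one _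
  -- The functions associated to sign sequences.
  set F : (ℕ → Bool) → M → ℝ := fun s x => ∑' n, chiSgn s n * g n x with hF
  have hFneg : ∀ (s : ℕ → Bool) (x : M), F (fun n => !s n) x = -F s x := by
    intro s x
    rw [hF]
    simp only
    rw [show (fun n => chiSgn (fun k => !s k) n * g n x) = fun n => -(chiSgn s n * g n x) by
      funext n; rw [chiSgn_not]; ring]
    exact tsum_neg
  -- Step 3: for every sign sequence, a "deep" point exists for it or its negation.
  have hdeep : ∀ s : ℕ → Bool, ∃ p : M,
      (∀ ε > 0, ∃ q : M, F s p - F s q > 2 - ε) ∨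
      (∀ ε > 0, ∃ q : M, F (fun n => !s n) p - F (fun n => !s n) q > 2 - ε) := by
    intro s
    obtain ⟨hl, hpa⟩ := H (chiSgn s) (chiSgn_summable s) (chiSgn_ne_zero s)
    rw [chiSgn_tsum s] at hl
    obtain ⟨p, hpn⟩ := hpa
    rw [hl] at hpn
    have happrox := pnormAt_approx hd hpn
    rcases deep_or happrox with h | h
    · exact ⟨p, Or.inl h⟩
    · refine ⟨p, Or.inr ?_⟩
      intro ε hε
      obtain ⟨q, hq⟩ := h ε hε
      exact ⟨q, by rw [hFneg s p, hFneg s q]; linarith⟩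
  -- Step 4: key lemma: two genuinely different sign sequences cannot be deep at the same point.
  have hkey : ∀ (s t : ℕ → Bool) (p : M), s ≠ t → s ≠ (fun n => !t n) →
      (∀ ε > 0, ∃ q : M, F s p - F s q > 2 - ε) →
      (∀ ε > 0, ∃ q : M, F t p - F t q > 2 - ε) → False := by
    intro s t p hst hstc hds hdt
    set c : ℕ → ℝ := fun n => (chiSgn s n - chiSgn t n) / 2 with hc
    set d : ℕ → ℝ := fun n => (chiSgn s n + chiSgn t n) / 2 with hdef
    have hcn : ∀ n, c n = (chiSgn s n - chiSgn t n) / 2 := fun n => rfl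
    have hdn : ∀ n, d n = (chiSgn s n + chiSgn t n) / 2 := fun n => rfl
    have hval : ∀ n, (c n = if s n = t n then 0 else chiSgn s n) ∧
        (d n = if s n = t n then chiSgn s n else 0) := by
      intro n
      rw [hcn n, hdn n]
      cases hs : s n <;> cases ht : t n
      · rw [chiSgn_false hs, chiSgn_false ht, if_pos rfl, if_pos rfl]
        constructor <;> ring
      · rw [chiSgn_false hs, chiSgn_true ht, if_neg (show ¬(false = true) by decide),
          if_neg (show ¬(false = true) by decide)]
        constructor <;> ring
      · rw [chiSgn_true hs, chiSgn_false ht, if_neg (show ¬(true = false) by decide),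
          if_neg (show ¬(true = false) by decide)]
        constructor <;> ring
      · rw [chiSgn_true hs, chiSgn_true ht, if_pos rfl, if_pos rfl]
        constructor <;> ring
    have hcabs : ∀ n, |c n| = if s n = t n then 0 else (1/2)^n := by
      intro n
      rw [(hval n).1]
      by_cases h : s n = t n
      · rw [if_pos h, if_pos h, abs_zero]
      · rw [if_neg h, if_neg h, chiSgn_abs]
    have hdabs : ∀ n, |d n| = if s n = t n then (1/2)^n else 0 := by
      intro n
      rw [(hval n).2]
      by_cases h : s n = t n
      · rw [if_pos h, if_pos h, chiSgn_abs]
      · rw [if_neg h, if_neg h, abs_zero]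
    have hgeo : Summable (fun n : ℕ => ((1:ℝ)/2)^n) :=
      summable_geometric_of_lt_one (by norm_num) (by norm_num)
    have hcsum : Summable (fun n => |c n|) := by
      apply Summable.of_nonneg_of_le (fun n => abs_nonneg _) _ hgeo
      intro n; rw [hcabs n]; by_cases h : s n = t n <;> simp [h]
    have hdsum : Summable (fun n => |d n|) := by
      apply Summable.of_nonneg_of_le (fun n => abs_nonneg _) _ hgeo
      intro n; rw [hdabs n]; by_cases h : s n = t n <;> simp [h]
    set β : ℝ := ∑' n, |c n| with hβdef
    set α : ℝ := ∑' n, |d n| with hαdef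
    -- α + β = 2
    have hαβ : α + β = 2 := by
      rw [hαdef, hβdef, ← Summable.tsum_add hdsum hcsum]
      have : (fun n => |d n| + |c n|) = fun n : ℕ => ((1:ℝ)/2)^n := by
        funext n; rw [hdabs n, hcabs n]; by_cases h : s n = t n <;> simp [h]
      rw [this, tsum_geometric_of_lt_one (by norm_num) (by norm_num)]
      norm_num
    -- β > 0 and c ≠ 0
    obtain ⟨m, hm⟩ := Function.ne_iff.mp hst
    have hcm : |c m| = (1/2)^m := by rw [hcabs m, if_neg hm]
    have hβpos : 0 < β := by
      have h1 : |c m| ≤ β := Summable.le_tsum hcsum m (fun j _ => abs_nonneg _)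
      have h2 : (0:ℝ) < (1/2)^m := by positivity
      rw [hcm] at h1; linarith
    have hcne : c ≠ 0 := by
      intro h
      have h0 : c m = 0 := congrFun h m
      rw [h0, abs_zero] at hcm
      have hpos : (0:ℝ) < (1/2)^m := by positivity
      rw [← hcm] at hpos
      exact lt_irrefl _ hpos
    -- α > 0 and d ≠ 0
    obtain ⟨m', hm'⟩ := Function.ne_iff.mp hstc
    have hm'eq : s m' = t m' := by
      cases hs : s m' <;> cases ht : t m' <;> simp [hs, ht] at hm' ⊢
    have hdm : |d m'| = (1/2)^m' := by rw [hdabs m', if_pos hm'eq]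
    have hαpos : 0 < α := by
      have h1 : |d m'| ≤ α := Summable.le_tsum hdsum m' (fun j _ => abs_nonneg _)
      have h2 : (0:ℝ) < (1/2)^m' := by positivity
      rw [hdm] at h1; linarith
    have hdne : d ≠ 0 := by
      intro h
      have h0 : d m' = 0 := congrFun h m'
      rw [h0, abs_zero] at hdm
      have hpos : (0:ℝ) < (1/2)^m' := by positivity
      rw [← hdm] at hpos
      exact lt_irrefl _ hpos
    -- the functions W and U and their bounds
    obtain ⟨hlipc, _⟩ := H c hcsum hcne
    obtain ⟨hlipd, _⟩ := H d hdsum hdne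
    rw [← hβdef] at hlipc
    rw [← hαdef] at hlipd
    have hu : ∀ x y : M, |(∑' n, c n * g n x) - (∑' n, c n * g n y)| ≤ β := by
      intro x y
      have := lipNorm_bound_aux hd hβpos hlipc y x
      simpa using this
    have hw : ∀ x y : M, |(∑' n, d n * g n x) - (∑' n, d n * g n y)| ≤ α := by
      intro x y
      have := lipNorm_bound_aux hd hαpos hlipd y x
      simpa using this
    -- decompositions
    have hfwu : ∀ x : M, F s x = (∑' n, d n * g n x) + (∑' n, c n * g n x) := by
      intro x
      rw [← Summable.tsum_add (gsum d hdsum x) (gsum c hcsum x)]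
      apply tsum_congr
      intro n
      rw [hc, hdef]
      simp only
      ring
    have hhwu : ∀ x : M, F t x = (∑' n, d n * g n x) - (∑' n, c n * g n x) := by
      intro x
      rw [← Summable.tsum_sub (gsum d hdsum x) (gsum c hcsum x)]
      apply tsum_congr
      intro n
      rw [hc, hdef]
      simp only
      ring
    exact core_contradiction hβpos hαβ hfwu hhwu hw hu hds hdt
  -- Step 5: choose points and derive injectivity.
  let Φ : (ℕ → Bool) → M := fun s => (hdeep s).choose
  have hΦinj : ∀ s t : ℕ → Bool, Φ s = Φ t → s 0 = t 0 → s = t := by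
    intro s t hst h0
    by_contra hne
    have hs := (hdeep s).choose_spec
    have ht := (hdeep t).choose_spec
    rw [show (hdeep s).choose = Φ s from rfl, hst] at hs
    rw [show (hdeep t).choose = Φ t from rfl] at ht
    have hnotc : s ≠ (fun n => !t n) := by
      intro h
      have hthis := congrFun h 0
      cases ht0 : t 0 <;> simp [h0, ht0] at hthis
    rcases hs with hs1 | hs1 <;> rcases ht with ht1 | ht1
    · exact hkey s t (Φ t) hne hnotc hs1 ht1
    · refine hkey s (fun n => !t n) (Φ t) hnotc (fun h => hne ?_) hs1 ht1
      funext n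
      have hthis := congrFun h n
      cases hs0 : s n <;> cases ht0 : t n <;> simp [hs0, ht0] at hthis ⊢
    · refine hkey (fun n => !s n) t (Φ t) (fun h => hnotc ?_) (fun h => hne ?_) hs1 ht1
      all_goals
        funext n
        have hthis := congrFun h n
        cases hs0 : s n <;> cases ht0 : t n <;> simp [hs0, ht0] at hthis ⊢
    · refine hkey (fun n => !s n) (fun n => !t n) (Φ t) (fun h => hne ?_)
        (fun h => hnotc ?_) hs1 ht1
      all_goals
        funext n
        have hthis := congrFun h n
        cases hs0 : s n <;> cases ht0 : t n <;> simp [hs0, ht0] at hthis ⊢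
  -- Step 6: contradiction with uncountability of ℕ → Bool.
  have hinj : Function.Injective (fun s : ℕ → Bool => (Φ s, s 0)) := by
    intro s t h
    rw [Prod.ext_iff] at h
    exact hΦinj s t h.1 h.2
  have hcnt : Countable (ℕ → Bool) := hinj.countable
  have hcntSet : Countable (Set ℕ) := by
    have hinj2 : Function.Injective (fun S : Set ℕ => fun n => decide (n ∈ S)) := by
      intro S T h
      ext n
      have := congrFun h n
      simpa using this
    exact hinj2.countable
  obtain ⟨f, hf⟩ := exists_injective_nat (Set ℕ)
  exact Function.cantor_injective f hf
end

section
/- Let M be an infinite pointed metric space containing a family of distinct points {p_γ}_{γ∈Γ} and points q_γ ∈ M \ {p_γ} such that d(p_γ, q_γ) = inf{d(p_γ, q) : q ∈ M, q ≠ p_γ} and d(p_α, p_β) ≥ d(p_α, q_α) + d(p_β, q_β) for all α ≠ β in Γ. Then SNA(M) contains an isometric copy of c₀(Γ): the functions f_γ defined by f_γ(p_γ) = ±d(p_γ, q_γ) (appropriate sign, with f_γ(0)=0 forced by translation) and f_γ(p) = 0 for p ≠ p_γ strongly attain their norms, are isometrically equivalent to the canonical basis of c₀(Γ), and every c₀(Γ)-combination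 of them strongly attains its norm with the correct norm. -/
open Filter Metric MeasureTheory

/-- with Γ = ℕ: if M contains distinct points pₙ with nearest points qₙ
(d(pₙ,qₙ) = R(pₙ)) separated by d(pₙ,pₘ) ≥ d(pₙ,qₙ) + d(pₘ,qₘ), then the functions
fₙ = d(pₙ,qₙ)·1_{pₙ} form an isometric c₀-basis inside SNA(M). -/
theorem stmt8 {M : Type*} [MetricSpace M] [Infinite M] (z : M)
    (p q : ℕ → M) (hinj : Function.Injective p)
    (hq : ∀ n, q n ≠ p n)
    (hR : ∀ n, ∀ x : M, x ≠ p n → dist (p n) (q n) ≤ dist (p n) x)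
    (hsep : ∀ n m, n ≠ m → dist (p n) (q n) + dist (p m) (q m) ≤ dist (p n) (p m)) :
    ∀ a : ℕ → ℝ, Tendsto a atTop (nhds 0) → a ≠ 0 →
      lipNorm (fun x => ∑' n, a n *
          ({p n} : Set M).indicator (fun _ => dist (p n) (q n)) x) = (⨆ n, |a n|) ∧
      StronglyAttains (fun x => ∑' n, a n *
          ({p n} : Set M).indicator (fun _ => dist (p n) (q n)) x) := by
  intro a ha hane
  set f : M → ℝ := fun x => ∑' n, a n *
      ({p n} : Set M).indicator (fun _ => dist (p n) (q n)) x with hf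
  have hdpos : ∀ n, (0:ℝ) < dist (p n) (q n) := fun n => dist_pos.2 (Ne.symm (hq n))
  -- find the argmax N of |a ·|
  obtain ⟨k, hk⟩ := Function.ne_iff.1 hane
  have hk' : (0:ℝ) < |a k| := abs_pos.2 hk
  obtain ⟨N₀, hN₀⟩ := Metric.tendsto_atTop.1 ha (|a k|) hk'
  obtain ⟨N, hNmem, hNmax⟩ := Finset.exists_max_image (insert k (Finset.range N₀))
    (fun n => |a n|) ⟨k, Finset.mem_insert_self _ _⟩
  have hub : ∀ n, |a n| ≤ |a N| := by
    intro n
    by_cases hn : n ∈ insert k (Finset.range N₀)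
    · exact hNmax n hn
    · have hn' : N₀ ≤ n := by
        by_contra h
        exact hn (Finset.mem_insert_of_mem (Finset.mem_range.2 (lt_of_not_ge h)))
      have h2 := hN₀ n hn'
      rw [Real.dist_eq, sub_zero] at h2
      exact le_trans h2.le (hNmax k (Finset.mem_insert_self _ _))
  have hSnonneg : (0:ℝ) ≤ |a N| := abs_nonneg _
  have hS : (⨆ n, |a n|) = |a N| :=
    le_antisymm (ciSup_le hub) (le_ciSup ⟨|a N|, Set.forall_mem_range.2 hub⟩ N)
  -- values of f
  have hfp : ∀ m, f (p m) = a m * dist (p m) (q m) := by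
    intro m
    have h1 : ∀ n, n ≠ m →
        a n * ({p n} : Set M).indicator (fun _ => dist (p n) (q n)) (p m) = 0 := by
      intro n hn
      rw [Set.indicator_of_notMem
        (fun h => hn ((hinj (Set.mem_singleton_iff.1 h)).symm)), mul_zero]
    simp only [hf]
    rw [tsum_eq_single m h1, Set.indicator_of_mem (Set.mem_singleton _)]
  have hf0 : ∀ x : M, (∀ n, x ≠ p n) → f x = 0 := by
    intro x hx
    have h1 : ∀ n, a n * ({p n} : Set M).indicator (fun _ => dist (p n) (q n)) x = 0 := by
      intro n
      rw [Set.indicator_of_notMem (fun h => hx n (Set.mem_singleton_iff.1 h)), mul_zero]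
    simp only [hf]
    rw [tsum_congr h1, tsum_zero]
  have hqN : ∀ m, q N ≠ p m := by
    intro m h
    by_cases hm : m = N
    · exact hq N (by rw [h, hm])
    · have h2 := hsep N m (fun e => hm e.symm)
      have h3 : dist (p N) (p m) = dist (p N) (q N) := by rw [h]
      rw [h3] at h2
      linarith [hdpos m]
  have hratio : |f (q N) - f (p N)| / dist (p N) (q N) = |a N| := by
    rw [hf0 _ hqN, hfp, zero_sub, abs_neg, abs_mul, abs_of_pos (hdpos N)]
    exact mul_div_cancel_right₀ _ (hdpos N).ne'
  have habs : ∀ n (y : M), (∀ m, y ≠ p m) → |f y - f (p n)| ≤ |a N| * dist (p n) y := by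
    intro n y hy
    rw [hf0 y hy, hfp n, zero_sub, abs_neg, abs_mul, abs_of_pos (hdpos n)]
    calc |a n| * dist (p n) (q n) ≤ |a N| * dist (p n) (q n) :=
          mul_le_mul_of_nonneg_right (hub n) dist_nonneg
      _ ≤ |a N| * dist (p n) y :=
          mul_le_mul_of_nonneg_left (hR n y (hy n)) hSnonneg
  have hlip : ∀ x y : M, |f y - f x| ≤ |a N| * dist x y := by
    intro x y
    by_cases hx : ∃ n, x = p n
    · obtain ⟨n, rfl⟩ := hx
      by_cases hy : ∃ m, y = p m
      · obtain ⟨m, rfl⟩ := hy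
        by_cases hnm : n = m
        · subst hnm
          simp [mul_nonneg hSnonneg dist_nonneg]
        · rw [hfp, hfp]
          have h2 : |a m * dist (p m) (q m) - a n * dist (p n) (q n)| ≤
              |a m| * dist (p m) (q m) + |a n| * dist (p n) (q n) := by
            calc |a m * dist (p m) (q m) - a n * dist (p n) (q n)|
                ≤ |a m * dist (p m) (q m)| + |a n * dist (p n) (q n)| := abs_sub _ _
              _ = _ := by rw [abs_mul, abs_mul, abs_of_nonneg dist_nonneg,
                  abs_of_nonneg dist_nonneg]
          have h3 := mul_le_mul_of_nonneg_right (hub m) (dist_nonneg (x := p m) (y := q m))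
          have h4 := mul_le_mul_of_nonneg_right (hub n) (dist_nonneg (x := p n) (y := q n))
          have h5 := mul_le_mul_of_nonneg_left (hsep n m hnm) hSnonneg
          rw [mul_add] at h5
          linarith
      · exact habs n y (fun m hm => hy ⟨m, hm⟩)
    · by_cases hy : ∃ m, y = p m
      · obtain ⟨m, rfl⟩ := hy
        rw [abs_sub_comm, dist_comm]
        exact habs m x (fun n h => hx ⟨n, h⟩)
      · rw [hf0 x (fun n h => hx ⟨n, h⟩), hf0 y (fun n h => hy ⟨n, h⟩), sub_self, abs_zero]
        exact mul_nonneg hSnonneg dist_nonneg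
  -- the sup set
  have hubset : ∀ r ∈ {r : ℝ | ∃ x y : M, x ≠ y ∧ r = |f y - f x| / dist x y}, r ≤ |a N| := by
    rintro r ⟨x, y, hxy, rfl⟩
    rw [div_le_iff₀ (dist_pos.2 hxy)]
    exact hlip x y
  have hmem : |a N| ∈ {r : ℝ | ∃ x y : M, x ≠ y ∧ r = |f y - f x| / dist x y} :=
    ⟨p N, q N, Ne.symm (hq N), hratio.symm⟩
  have hlipnorm : lipNorm f = |a N| := by
    refine le_antisymm (csSup_le ⟨_, hmem⟩ hubset) (le_csSup ⟨|a N|, hubset⟩ hmem)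
  refine ⟨by rw [hS]; exact hlipnorm, p N, q N, Ne.symm (hq N), by rw [hratio, hlipnorm]⟩
end

section
/- Let M be an infinite uniformly discrete pointed metric space containing pairs of distinct points {(pₙ, qₙ)}_{n∈ℕ} with all points {pₙ, qₙ : n ∈ ℕ} pairwise distinct, such that for each n, R(pₙ) ≥ d(pₙ,qₙ)/2 and R(qₙ) ≥ d(pₙ,qₙ)/2, and for all n ≠ m, d(pₙ,qₙ) + d(pₘ,qₘ) ≤ 2·min{d(r,s) : r ∈ {pₙ,qₙ}, s ∈ {pₘ,qₘ}}. Then the functions fₙ defined by fₙ(pₙ) = d(pₙ,qₙ)/2, fₙ(qₙ) = -d(pₙ,qₙ)/2, and fₙ = 0 elsewhere (adjusted to vanish at the base point) form an isometric copy of the canonical c₀-basis inside SNA(M): for every (aₙ) ∈ c₀, the function Σₙ aₙ fₙ strongly attains its norm and its Lipschitz norm equals sup_n |aₙ|. -/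
open Filter Metric MeasureTheory

/-- two-point "molecular" functions fₙ with fₙ(pₙ) = d(pₙ,qₙ)/2,
fₙ(qₙ) = -d(pₙ,qₙ)/2 form an isometric c₀-basis in SNA(M). -/
theorem stmt9 {M : Type*} [MetricSpace M] [Infinite M]
    (hud : ∃ δ > (0:ℝ), ∀ p q : M, p ≠ q → δ ≤ dist p q)
    (p q : ℕ → M) (hpq : ∀ n, p n ≠ q n)
    (hdisj : ∀ n m, n ≠ m → p n ≠ p m ∧ p n ≠ q m ∧ q n ≠ q m ∧ q n ≠ p m)
    (hRp : ∀ n, ∀ x : M, x ≠ p n → dist (p n) (q n) / 2 ≤ dist (p n) x)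
    (hRq : ∀ n, ∀ x : M, x ≠ q n → dist (p n) (q n) / 2 ≤ dist (q n) x)
    (hsep : ∀ n m, n ≠ m → ∀ r s : M, (r = p n ∨ r = q n) → (s = p m ∨ s = q m) →
      dist (p n) (q n) + dist (p m) (q m) ≤ 2 * dist r s) :
    ∀ a : ℕ → ℝ, Tendsto a atTop (nhds 0) → a ≠ 0 →
      lipNorm (fun x => ∑' n, a n *
          (({p n} : Set M).indicator (fun _ => dist (p n) (q n) / 2) x -
           ({q n} : Set M).indicator (fun _ => dist (p n) (q n) / 2) x)) = (⨆ n, |a n|) ∧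
      StronglyAttains (fun x => ∑' n, a n *
          (({p n} : Set M).indicator (fun _ => dist (p n) (q n) / 2) x -
           ({q n} : Set M).indicator (fun _ => dist (p n) (q n) / 2) x)) := by
  intro a ha ha0
  set F : M → ℝ := fun x => ∑' n, a n *
      (({p n} : Set M).indicator (fun _ => dist (p n) (q n) / 2) x -
       ({q n} : Set M).indicator (fun _ => dist (p n) (q n) / 2) x) with hF
  have hd : ∀ n, 0 < dist (p n) (q n) := fun n => dist_pos.2 (hpq n)
  have hFp : ∀ k, F (p k) = a k * (dist (p k) (q k) / 2) := by
    intro k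
    have h1 : F (p k) = a k *
        (({p k} : Set M).indicator (fun _ => dist (p k) (q k) / 2) (p k) -
         ({q k} : Set M).indicator (fun _ => dist (p k) (q k) / 2) (p k)) := by
      rw [hF]
      apply tsum_eq_single
      intro n hn
      simp [Set.indicator_apply, Set.mem_singleton_iff, Ne.symm (hdisj n k hn).1,
        Ne.symm (hdisj n k hn).2.2.2]
    rw [h1]
    simp [Set.indicator_apply, Set.mem_singleton_iff, Ne.symm (hpq k)]
  have hFq : ∀ k, F (q k) = -(a k * (dist (p k) (q k) / 2)) := by
    intro k
    have h1 : F (q k) = a k *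
        (({p k} : Set M).indicator (fun _ => dist (p k) (q k) / 2) (q k) -
         ({q k} : Set M).indicator (fun _ => dist (p k) (q k) / 2) (q k)) := by
      rw [hF]
      apply tsum_eq_single
      intro n hn
      simp [Set.indicator_apply, Set.mem_singleton_iff, Ne.symm (hdisj n k hn).2.1,
        Ne.symm (hdisj n k hn).2.2.1]
    rw [h1]
    simp [Set.indicator_apply, Set.mem_singleton_iff, hpq k, Ne.symm (hpq k)]
  have hF0 : ∀ x : M, (∀ n, x ≠ p n ∧ x ≠ q n) → F x = 0 := by
    intro x hx
    have h1 : ∀ n : ℕ, a n *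
        (({p n} : Set M).indicator (fun _ => dist (p n) (q n) / 2) x -
         ({q n} : Set M).indicator (fun _ => dist (p n) (q n) / 2) x) = 0 := by
      intro n
      simp [Set.indicator_apply, Set.mem_singleton_iff, (hx n).1, (hx n).2]
    rw [hF]
    calc (∑' n, a n *
        (({p n} : Set M).indicator (fun _ => dist (p n) (q n) / 2) x -
         ({q n} : Set M).indicator (fun _ => dist (p n) (q n) / 2) x))
        = ∑' _ : ℕ, (0:ℝ) := tsum_congr h1
      _ = 0 := tsum_zero
  set S : ℝ := ⨆ n, |a n| with hS
  have habs : Tendsto (fun n => |a n|) atTop (nhds 0) := by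
    simpa using ha.abs
  have bddA : BddAbove (Set.range fun n => |a n|) := habs.bddAbove_range
  have haS : ∀ n, |a n| ≤ S := fun n => le_ciSup bddA n
  obtain ⟨m, ham⟩ := Function.ne_iff.mp ha0
  have hSpos : 0 < S := lt_of_lt_of_le (abs_pos.2 ham) (haS m)
  have hev : ∀ᶠ n in atTop, |a n| < |a m| := habs.eventually (gt_mem_nhds (abs_pos.2 ham))
  obtain ⟨N₀, hN₀⟩ := eventually_atTop.mp hev
  obtain ⟨N, hNT, hNmax⟩ := (insert m (Finset.range (N₀+1))).exists_max_image
    (fun n => |a n|) ⟨m, by simp⟩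
  have hNall : ∀ n, |a n| ≤ |a N| := by
    intro n
    by_cases hn : n ≤ N₀
    · exact hNmax n (by simp [Finset.mem_insert, Finset.mem_range]; omega)
    · exact le_of_lt (lt_of_lt_of_le (hN₀ n (by omega)) (hNmax m (by simp)))
  have hSN : S = |a N| := le_antisymm (ciSup_le hNall) (le_ciSup bddA N)
  have cls : ∀ x : M, (∃ n, x = p n) ∨ (∃ n, x = q n) ∨ (∀ n, x ≠ p n ∧ x ≠ q n) := by
    intro x
    by_cases h1 : ∃ n, x = p n
    · exact Or.inl h1
    by_cases h2 : ∃ n, x = q n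
    · exact Or.inr (Or.inl h2)
    push_neg at h1 h2
    exact Or.inr (Or.inr fun n => ⟨h1 n, h2 n⟩)
  have tri : ∀ (x y : M) (cx cy : ℝ), |F x| ≤ S * cx → |F y| ≤ S * cy →
      cx + cy ≤ dist x y → |F y - F x| ≤ S * dist x y := by
    intro x y cx cy h1 h2 h3
    calc |F y - F x| ≤ |F y| + |F x| := abs_sub _ _
      _ ≤ S * cy + S * cx := add_le_add h2 h1
      _ = S * (cx + cy) := by ring
      _ ≤ S * dist x y := mul_le_mul_of_nonneg_left h3 hSpos.le
  have vb : ∀ n, |a n * (dist (p n) (q n) / 2)| ≤ S * (dist (p n) (q n) / 2) := by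
    intro n
    rw [abs_mul, abs_of_nonneg (by positivity : (0:ℝ) ≤ dist (p n) (q n) / 2)]
    exact mul_le_mul_of_nonneg_right (haS n) (by positivity)
  have key : ∀ x y : M, x ≠ y → |F y - F x| ≤ S * dist x y := by
    intro x y hxy
    rcases cls x with ⟨n, rfl⟩ | ⟨n, rfl⟩ | hx
    · rcases cls y with ⟨m', rfl⟩ | ⟨m', rfl⟩ | hy
      · have hnm : n ≠ m' := fun h => hxy (by rw [h])
        refine tri _ _ _ _ (by rw [hFp]; exact vb n) (by rw [hFp]; exact vb m') ?_
        have := hsep n m' hnm (p n) (p m') (Or.inl rfl) (Or.inl rfl)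
        linarith
      · by_cases hnm : n = m'
        · subst hnm
          refine tri _ _ _ _ (by rw [hFp]; exact vb n)
            (by rw [hFq, abs_neg]; exact vb n) ?_
          linarith
        · refine tri _ _ _ _ (by rw [hFp]; exact vb n)
            (by rw [hFq, abs_neg]; exact vb m') ?_
          have := hsep n m' hnm (p n) (q m') (Or.inl rfl) (Or.inr rfl)
          linarith
      · refine tri _ _ _ (0:ℝ) (by rw [hFp]; exact vb n)
          (by rw [hF0 y hy]; simp) ?_
        have := hRp n y (hy n).1
        linarith
    · rcases cls y with ⟨m', rfl⟩ | ⟨m', rfl⟩ | hy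
      · by_cases hnm : n = m'
        · subst hnm
          refine tri _ _ _ _ (by rw [hFq, abs_neg]; exact vb n)
            (by rw [hFp]; exact vb n) ?_
          rw [dist_comm]
          linarith
        · refine tri _ _ _ _ (by rw [hFq, abs_neg]; exact vb n)
            (by rw [hFp]; exact vb m') ?_
          have := hsep n m' hnm (q n) (p m') (Or.inr rfl) (Or.inl rfl)
          linarith
      · have hnm : n ≠ m' := fun h => hxy (by rw [h])
        refine tri _ _ _ _ (by rw [hFq, abs_neg]; exact vb n)
          (by rw [hFq, abs_neg]; exact vb m') ?_
        have := hsep n m' hnm (q n) (q m') (Or.inr rfl) (Or.inr rfl)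
        linarith
      · refine tri _ _ _ (0:ℝ) (by rw [hFq, abs_neg]; exact vb n)
          (by rw [hF0 y hy]; simp) ?_
        have := hRq n y (hy n).2
        linarith
    · rcases cls y with ⟨m', rfl⟩ | ⟨m', rfl⟩ | hy
      · refine tri _ _ (0:ℝ) (dist (p m') (q m') / 2) (by rw [hF0 x hx]; simp)
          (by rw [hFp]; exact vb m') ?_
        have h2 := hRp m' x (hx m').1
        have hc : dist x (p m') = dist (p m') x := dist_comm _ _
        linarith
      · refine tri _ _ (0:ℝ) (dist (p m') (q m') / 2) (by rw [hF0 x hx]; simp)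
          (by rw [hFq, abs_neg]; exact vb m') ?_
        have h2 := hRq m' x (hx m').2
        have hc : dist x (q m') = dist (q m') x := dist_comm _ _
        linarith
      · refine tri _ _ (0:ℝ) (0:ℝ) (by rw [hF0 x hx]; simp)
          (by rw [hF0 y hy]; simp) ?_
        simpa using dist_nonneg
  have hratio : |F (q N) - F (p N)| / dist (p N) (q N) = S := by
    rw [hFq, hFp]
    have h1 : -(a N * (dist (p N) (q N) / 2)) - a N * (dist (p N) (q N) / 2)
        = -(a N * dist (p N) (q N)) := by ring
    rw [h1, abs_neg, abs_mul, abs_of_nonneg dist_nonneg, mul_div_assoc,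
      div_self (hd N).ne', mul_one, hSN]
  have hmem : S ∈ {r : ℝ | ∃ x y : M, x ≠ y ∧ r = |F y - F x| / dist x y} :=
    ⟨p N, q N, hpq N, hratio.symm⟩
  have hub : ∀ r ∈ {r : ℝ | ∃ x y : M, x ≠ y ∧ r = |F y - F x| / dist x y}, r ≤ S := by
    rintro r ⟨x, y, hxy, rfl⟩
    rw [div_le_iff₀ (dist_pos.2 hxy)]
    exact key x y hxy
  have hlip : lipNorm F = S :=
    le_antisymm (csSup_le ⟨S, hmem⟩ hub) (le_csSup ⟨S, hub⟩ hmem)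
  exact ⟨hlip, ⟨p N, q N, hpq N, by rw [hratio, hlip]⟩⟩
end

section
/- Let M = {pₙ : n ∈ ℕ} be a pointed metric space such that (i) d(pₙ, pₘ) is nonincreasing in both n and m and limₘ d(pₙ, pₘ) = L > 0 for each n, and (ii) d(pₙ, pₘ) > L for all n ≠ m. Then SNA(M) does not contain an isometric copy of c₀: there is no sequence (fₙ) of strongly norm-attaining Lipschitz functions on M that is isometrically equivalent to the canonical basis of c₀ with all finite sign-combinations Σ_{n∈F} ±fₙ of norm 1 and strongly norm-attaining. -/
open Filter Metric MeasureTheory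

/-- If the Lipschitz norm is 1, then `f` is 1-Lipschitz (needs two distinct points
so that the defining set is nonempty). -/
lemma lip_le {M : Type*} [MetricSpace M] (g : M → ℝ) (x₀ y₀ : M) (h₀ : x₀ ≠ y₀)
    (h1 : lipNorm g = 1) : ∀ x y : M, |g y - g x| ≤ dist x y := by
  have hbdd : BddAbove {r : ℝ | ∃ p q : M, p ≠ q ∧ r = |g q - g p| / dist p q} := by
    by_contra h
    rw [lipNorm, Real.sSup_of_not_bddAbove h] at h1
    norm_num at h1
  intro x y
  rcases eq_or_ne x y with rfl | hxy
  · simp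
  · have hmem : |g y - g x| / dist x y ∈
        {r : ℝ | ∃ p q : M, p ≠ q ∧ r = |g q - g p| / dist p q} := ⟨x, y, hxy, rfl⟩
    have h2 : |g y - g x| / dist x y ≤ 1 := by
      rw [← h1, lipNorm]
      exact le_csSup hbdd hmem
    have hd : (0:ℝ) < dist x y := dist_pos.2 hxy
    rw [div_le_one hd] at h2
    exact h2

/-- if d(pₙ,pₘ) is nonincreasing with limit L > 0 and d(pₙ,pₘ) > L for
n ≠ m, then SNA(M) contains no sequence isometrically equivalent to the c₀-basis
(all finite sign-combinations of norm 1 and strongly attaining). -/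
theorem stmt10 {M : Type*} [MetricSpace M] (z : M)
    (p : ℕ → M) (hinj : Function.Injective p) (hsurj : ∀ x : M, ∃ n, x = p n)
    (L : ℝ) (hL : 0 < L)
    (hmono : ∀ n m m', m ≤ m' → n ≠ m → n ≠ m' → dist (p n) (p m') ≤ dist (p n) (p m))
    (hlim : ∀ n, Tendsto (fun m => dist (p n) (p m)) atTop (nhds L))
    (hgt : ∀ n m, n ≠ m → L < dist (p n) (p m)) :
    ¬ ∃ f : ℕ → M → ℝ, (∀ n, f n z = 0) ∧
      (∀ n, lipNorm (f n) = 1 ∧ StronglyAttains (f n)) ∧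
      (∀ s : Finset ℕ, s.Nonempty → ∀ ε : ℕ → ℝ, (∀ n, ε n = 1 ∨ ε n = -1) →
        lipNorm (fun x => ∑ n ∈ s, ε n * f n x) = 1 ∧
        StronglyAttains (fun x => ∑ n ∈ s, ε n * f n x)) := by
  rintro ⟨f, -, hsingle, hcombo⟩
  have hp01 : p 0 ≠ p 1 := fun h => absurd (hinj h) (by norm_num)
  -- each f n is 1-Lipschitz
  have hlip1 : ∀ n, ∀ x y : M, |f n y - f n x| ≤ dist x y := fun n =>
    lip_le (f n) _ _ hp01 (hsingle n).1
  -- f n + σ * f m is 1-Lipschitz for σ = ±1, n ≠ m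
  have hlip2 : ∀ n m : ℕ, n ≠ m → ∀ σ : ℝ, (σ = 1 ∨ σ = -1) →
      ∀ x y : M, |(f n y + σ * f m y) - (f n x + σ * f m x)| ≤ dist x y := by
    intro n m hnm σ hσ
    set ε : ℕ → ℝ := fun k => if k = m then σ else 1 with hε
    have hεv : ∀ k, ε k = 1 ∨ ε k = -1 := by
      intro k
      by_cases h : k = m
      · simp only [hε, if_pos h]; exact hσ
      · left; simp [hε, h]
    have hs : ({n, m} : Finset ℕ).Nonempty := ⟨n, by simp⟩
    have hnorm := (hcombo {n, m} hs ε hεv).1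
    have hfun : (fun x => ∑ k ∈ ({n, m} : Finset ℕ), ε k * f k x)
        = fun x => f n x + σ * f m x := by
      funext x
      rw [Finset.sum_pair hnm]
      simp [hε, hnm]
    rw [hfun] at hnorm
    exact lip_le _ _ _ hp01 hnorm
  -- attaining pairs with positive orientation
  have hatt : ∀ n, ∃ u v : M, u ≠ v ∧ f n v - f n u = dist u v := by
    intro n
    obtain ⟨hn1, x, y, hxy, habs⟩ := hsingle n
    rw [hn1] at habs
    have hd : (0:ℝ) < dist x y := dist_pos.2 hxy
    have habs' : |f n y - f n x| = dist x y := by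
      field_simp at habs
      linarith
    rcases abs_cases (f n y - f n x) with ⟨h, _⟩ | ⟨h, _⟩
    · exact ⟨x, y, hxy, by rw [← habs', h]⟩
    · refine ⟨y, x, hxy.symm, ?_⟩
      rw [dist_comm]
      linarith
  choose u v huv hor using hatt
  choose a ha using fun n => hsurj (u n)
  choose b hb using fun n => hsurj (v n)
  have hab : ∀ n, a n ≠ b n := by
    intro n h
    apply huv n
    rw [ha, hb, h]
  have hD : ∀ n, L < dist (u n) (v n) := by
    intro n
    rw [ha, hb]
    exact hgt _ _ (hab n)
  -- f m is constant on the attaining pair of f n, n ≠ m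
  have hconst : ∀ n m, n ≠ m → f m (v n) = f m (u n) := by
    intro n m hnm
    have h1 := hlip2 n m hnm 1 (Or.inl rfl) (u n) (v n)
    have h2 := hlip2 n m hnm (-1) (Or.inr rfl) (u n) (v n)
    have e1 := (abs_le.1 h1).2
    have e2 := (abs_le.1 h2).2
    have o := hor n
    linarith
  -- the key inequality (A)
  have hA : ∀ n m, n ≠ m → dist (u n) (v n) + dist (u m) (v m)
      ≤ dist (u n) (u m) + dist (v n) (v m) := by
    intro n m hnm
    have h1 := hlip2 n m hnm (-1) (Or.inr rfl) (v m) (v n)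
    have h2 := hlip2 n m hnm (-1) (Or.inr rfl) (u n) (u m)
    have e1 := (abs_le.1 h1).2
    have e2 := (abs_le.1 h2).2
    have c1 := hconst n m hnm
    have c2 := hconst m n hnm.symm
    have o1 := hor n
    have o2 := hor m
    have hcm : dist (v m) (v n) = dist (v n) (v m) := dist_comm _ _
    linarith
  -- geometric facts
  have hbound : ∀ i j : ℕ, i ≠ j → j ≠ 0 → dist (p i) (p j) ≤ dist (p 0) (p j) := by
    intro i j hij hj0
    have h := hmono j 0 i (Nat.zero_le i) hj0 (Ne.symm hij)
    rw [dist_comm (p j) (p i), dist_comm (p j) (p 0)] at h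
    exact h
  have hsmall : ∀ ε : ℝ, 0 < ε → ∃ K : ℕ, ∀ j, K ≤ j → dist (p 0) (p j) < L + ε := by
    intro ε hε
    have h := hlim 0
    rw [Metric.tendsto_atTop] at h
    obtain ⟨K, hK⟩ := h ε hε
    refine ⟨K, fun j hj => ?_⟩
    have h2 := hK j hj
    rw [Real.dist_eq] at h2
    have h3 := abs_lt.1 h2
    linarith [h3.1, h3.2]
  -- distinct attaining pairs
  have hdist : ∀ n m, n ≠ m → ¬(u n = u m ∧ v n = v m) := by
    rintro n m hnm ⟨h1, h2⟩
    have hc := hconst n m hnm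
    rw [h1, h2] at hc
    have o := hor m
    have d := hD m
    linarith
  by_cases hcase : ∀ K : ℕ, ∃ m, K ≤ a m ∧ K ≤ b m
  · -- Case I : pairs with arbitrarily large indices
    have key : ∀ ε : ℝ, 0 < ε → dist (u 0) (v 0) < L + 2 * ε := by
      intro ε hε
      obtain ⟨K, hK⟩ := hsmall ε hε
      obtain ⟨m, hma, hmb⟩ := hcase (K + a 0 + b 0 + 1)
      have ham : a 0 ≠ a m := by omega
      have h0m : (0:ℕ) ≠ m := fun h => ham (congrArg a h)
      have hAm := hA 0 m h0m
      have hDm := hD m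
      have b1 : dist (u 0) (u m) ≤ dist (p 0) (p (a m)) := by
        rw [ha 0, ha m]
        exact hbound _ _ ham (by omega)
      have b2 : dist (v 0) (v m) ≤ dist (p 0) (p (b m)) := by
        rw [hb 0, hb m]
        exact hbound _ _ (by omega) (by omega)
      have s1 := hK (a m) (by omega)
      have s2 := hK (b m) (by omega)
      linarith
    have hD0 := hD 0
    have hk := key ((dist (u 0) (v 0) - L)/2) (by linarith)
    linarith
  · -- Case II : all pairs touch a fixed finite set of points
    push_neg at hcase
    obtain ⟨K₀, hK₀⟩ := hcase
    have hK₀' : ∀ m, K₀ ≤ a m → b m < K₀ := fun m h => (hK₀ m h)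
    rcases Nat.eq_zero_or_pos K₀ with h0 | hpos
    · subst h0
      exact absurd (hK₀' 0 (Nat.zero_le _)) (Nat.not_lt_zero _)
    set φ : ℕ → Fin K₀ × Bool := fun m =>
      if h : a m < K₀ then ((⟨a m, h⟩ : Fin K₀), true)
      else ((⟨b m, hK₀' m (le_of_not_gt h)⟩ : Fin K₀), false) with hφ
    obtain ⟨⟨i₀, side⟩, hSfib⟩ := Finite.exists_infinite_fiber φ
    rw [Set.infinite_coe_iff] at hSfib
    have hSinf : (φ ⁻¹' {(i₀, side)}).Infinite := hSfib
    set S := φ ⁻¹' {(i₀, side)} with hSdef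
    cases side with
    | true =>
      have hmem : ∀ m ∈ S, a m = i₀.val := by
        intro m hm
        have hm' : φ m = (i₀, true) := hm
        rw [hφ] at hm'
        simp only at hm'
        by_cases h : a m < K₀
        · rw [dif_pos h] at hm'
          have := congrArg Prod.fst hm'
          exact congrArg Fin.val this
        · rw [dif_neg h] at hm'
          have := congrArg Prod.snd hm'
          simp at this
      have hbinj : ∀ n ∈ S, ∀ m ∈ S, n ≠ m → b n ≠ b m := by
        intro n hn m hm hnm hbb
        refine hdist n m hnm ⟨?_, ?_⟩
        · rw [ha n, ha m, hmem n hn, hmem m hm]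
        · rw [hb n, hb m, hbb]
      have hbub : ∀ K : ℕ, ∃ m ∈ S, K ≤ b m := by
        intro K
        by_contra h
        push_neg at h
        apply hSinf
        have himg : (b '' S).Finite := (Set.finite_Iio K).subset
          (by rintro _ ⟨m, hm, rfl⟩; exact Set.mem_Iio.mpr (h m hm))
        exact Set.Finite.of_finite_image himg
          (fun n hn m hm hbb => by_contra fun hnm => hbinj n hn m hm hnm hbb)
      obtain ⟨n, hn⟩ := hSinf.nonempty
      obtain ⟨K, hK⟩ := hsmall (L/2) (by linarith)
      obtain ⟨m, hm, hbm⟩ := hbub (K + b n + 1)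
      have hnm : n ≠ m := by
        intro h
        subst h
        omega
      have hAnm := hA n m hnm
      have e0 : dist (u n) (u m) = 0 := by
        rw [ha n, ha m, hmem n hn, hmem m hm, dist_self]
      have e1 : dist (v n) (v m) ≤ dist (p 0) (p (b m)) := by
        rw [hb n, hb m]
        exact hbound _ _ (by omega) (by omega)
      have e2 := hK (b m) (by omega)
      have dn := hD n
      have dm := hD m
      linarith
    | false =>
      have hmem : ∀ m ∈ S, b m = i₀.val := by
        intro m hm
        have hm' : φ m = (i₀, false) := hm
        rw [hφ] at hm'
        simp only at hm'
        by_cases h : a m < K₀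
        · rw [dif_pos h] at hm'
          have := congrArg Prod.snd hm'
          simp at this
        · rw [dif_neg h] at hm'
          have := congrArg Prod.fst hm'
          exact congrArg Fin.val this
      have hainj : ∀ n ∈ S, ∀ m ∈ S, n ≠ m → a n ≠ a m := by
        intro n hn m hm hnm haa
        refine hdist n m hnm ⟨?_, ?_⟩
        · rw [ha n, ha m, haa]
        · rw [hb n, hb m, hmem n hn, hmem m hm]
      have haub : ∀ K : ℕ, ∃ m ∈ S, K ≤ a m := by
        intro K
        by_contra h
        push_neg at h
        apply hSinf
        have himg : (a '' S).Finite := (Set.finite_Iio K).subset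
          (by rintro _ ⟨m, hm, rfl⟩; exact Set.mem_Iio.mpr (h m hm))
        exact Set.Finite.of_finite_image himg
          (fun n hn m hm haa => by_contra fun hnm => hainj n hn m hm hnm haa)
      obtain ⟨n, hn⟩ := hSinf.nonempty
      obtain ⟨K, hK⟩ := hsmall (L/2) (by linarith)
      obtain ⟨m, hm, ham⟩ := haub (K + a n + 1)
      have hnm : n ≠ m := by
        intro h
        subst h
        omega
      have hAnm := hA n m hnm
      have e0 : dist (v n) (v m) = 0 := by
        rw [hb n, hb m, hmem n hn, hmem m hm, dist_self]
      have e1 : dist (u n) (u m) ≤ dist (p 0) (p (a m)) := by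
        rw [ha n, ha m]
        exact hbound _ _ (by omega) (by omega)
      have e2 := hK (a m) (by omega)
      have dn := hD n
      have dm := hD m
      linarith
end

section
/- Let M = {pₙ : n ∈ ℕ} be a pointed metric space with metric d(pₙ, pₘ) = L + φ(n,m) for n ≠ m, where L > 0 and φ : ℕ² → ℝ is symmetric and satisfies: (i) ψ(n) := limₘ φ(n,m) exists for all n; (ii) φ(n,m) > ψ(n) + ψ(m) for all n ≠ m; (iii) liminf over distinct pairs (n,m) of φ(n,m) is ≥ 0. Then F(M) does not contain an isometric copy of ℓ₁. -/
open Filter Metric MeasureTheory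

/-!
Suppose `(uₙ, vₙ)` were such a sequence of pairs, with `uₙ = p (aₙ)` and `vₙ = p (bₙ)`. Swapping
the partners of the pairs `0` and `m` cannot decrease the total length, so
`φ(a₀,b₀) + φ(aₘ,bₘ) ≤ φ(a₀,bₘ) + φ(b₀,aₘ)` for every `m` (the constant `L` cancels). As `m → ∞`
the indices `aₘ, bₘ` escape to infinity, so by (i) the cross terms tend to `ψ(a₀) + ψ(b₀)`,
by (iii) `φ(aₘ,bₘ)` is eventually almost nonnegative, and (ii) makes the cross terms strictly
smaller than `φ(a₀,b₀)`: a contradiction.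
-/

theorem add_diag_le_of_forall_perm {c : ℕ → ℕ → ℝ}
    (h : ∀ (N : ℕ) (σ : Equiv.Perm (Fin N)), ∑ i : Fin N, c i i ≤ ∑ i : Fin N, c i (σ i))
    (i j : ℕ) : c i i + c j j ≤ c i j + c j i := by
  rcases eq_or_ne i j with rfl | hij
  · exact le_rfl
  set i' : Fin (max i j + 1) := ⟨i, by omega⟩
  set j' : Fin (max i j + 1) := ⟨j, by omega⟩
  have hne : i' ≠ j' := Fin.ne_of_val_ne hij
  have hswap := h _ (Equiv.swap i' j')
  rw [← sub_nonneg, ← Finset.sum_sub_distrib, Fintype.sum_eq_add i' j' hne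
    fun x hx => by rw [Equiv.swap_apply_of_ne_of_ne hx.1 hx.2, sub_self]] at hswap
  simp only [Equiv.swap_apply_left, Equiv.swap_apply_right, i', j'] at hswap
  linarith

theorem eventually_neg_le_of_finite {φ : ℕ → ℕ → ℝ} {ε : ℝ}
    (hfin : {x : ℕ × ℕ | x.1 ≠ x.2 ∧ φ x.1 x.2 < -ε}.Finite)
    {a b : ℕ → ℕ} (ha : Tendsto a atTop atTop) (hab : ∀ m, a m ≠ b m) :
    ∀ᶠ m in atTop, -ε ≤ φ (a m) (b m) := by
  obtain ⟨B, hB⟩ := (hfin.image Prod.fst).bddAbove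
  filter_upwards [ha.eventually_gt_atTop B] with m hm
  by_contra! hlt
  have : a m ≤ B := hB ⟨(a m, b m), ⟨hab m, hlt⟩, rfl⟩
  omega

theorem exists_cross_add_lt {φ : ℕ → ℕ → ℝ} {ψ : ℕ → ℝ}
    (hψ : ∀ n, Tendsto (fun m => φ n m) atTop (nhds (ψ n)))
    (hliminf : ∀ ε > (0:ℝ), {x : ℕ × ℕ | x.1 ≠ x.2 ∧ φ x.1 x.2 < -ε}.Finite)
    {n k : ℕ} (hnk : ψ n + ψ k < φ n k)
    {a b : ℕ → ℕ} (ha : Tendsto a atTop atTop) (hb : Tendsto b atTop atTop)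
    (hab : ∀ m, a m ≠ b m) :
    ∃ m, φ n (b m) + φ k (a m) < φ n k + φ (a m) (b m) := by
  set δ := φ n k - ψ n - ψ k
  have hδ : 0 < δ / 3 := by simp only [δ]; linarith
  have hn : ∀ᶠ m in atTop, φ n (b m) < ψ n + δ / 3 :=
    ((hψ n).comp hb).eventually_lt_const (by linarith)
  have hk : ∀ᶠ m in atTop, φ k (a m) < ψ k + δ / 3 :=
    ((hψ k).comp ha).eventually_lt_const (by linarith)
  have hdiag := eventually_neg_le_of_finite (hliminf _ hδ) ha hab
  obtain ⟨m, hnm, hkm, hdiagm⟩ := (hn.and (hk.and hdiag)).exists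
  exact ⟨m, by linarith⟩

theorem stmt12_general {M : Type*} [MetricSpace M]
    (p : ℕ → M) (hsurj : ∀ x : M, ∃ n, x = p n)
    (L : ℝ) (φ : ℕ → ℕ → ℝ) (ψ : ℕ → ℝ)
    (hdist : ∀ n m, n ≠ m → dist (p n) (p m) = L + φ n m)
    (hψ : ∀ n, Tendsto (fun m => φ n m) atTop (nhds (ψ n)))
    (hgt : ∀ n m, n ≠ m → ψ n + ψ m < φ n m)
    (hliminf : ∀ ε > (0:ℝ), {x : ℕ × ℕ | x.1 ≠ x.2 ∧ φ x.1 x.2 < -ε}.Finite) :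
    ¬ ∃ u v : ℕ → M, (∀ n, u n ≠ v n) ∧
      (∀ n m, n ≠ m → u n ≠ u m ∧ u n ≠ v m ∧ v n ≠ v m ∧ v n ≠ u m) ∧
      (∀ (N : ℕ) (σ : Equiv.Perm (Fin N)),
        (∑ i : Fin N, dist (u i.1) (v i.1)) ≤ ∑ i : Fin N, dist (u i.1) (v (σ i).1)) := by
  rintro ⟨u, v, huv, hdisj, hperm⟩
  choose a ha using fun n => hsurj (u n)
  choose b hb using fun n => hsurj (v n)
  have hab : ∀ n m, a n ≠ b m := fun n m h => by
    have huv' : u n = v m := by rw [ha, hb, h]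
    rcases eq_or_ne n m with rfl | hnm
    exacts [huv n huv', (hdisj n m hnm).2.1 huv']
  have ha_inj : a.Injective := fun n m h => by
    by_contra hnm
    exact (hdisj n m hnm).1 (by rw [ha, ha, h])
  have hb_inj : b.Injective := fun n m h => by
    by_contra hnm
    exact (hdisj n m hnm).2.2.1 (by rw [hb, hb, h])
  have hd : ∀ n m, dist (u n) (v m) = L + φ (a n) (b m) := fun n m => by
    rw [ha, hb]; exact hdist _ _ (hab n m)
  obtain ⟨m, hm⟩ := exists_cross_add_lt hψ hliminf (hgt _ _ (hab 0 0))
    ha_inj.nat_tendsto_atTop hb_inj.nat_tendsto_atTop (fun m => hab m m)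
  have hswap := add_diag_le_of_forall_perm (c := fun i j => dist (u i) (v j)) hperm 0 m
  have hd' : dist (u m) (v 0) = L + φ (b 0) (a m) := by
    rw [dist_comm, ha, hb]; exact hdist _ _ (hab m 0).symm
  linarith [hd 0 0, hd m m, hd 0 m]

/-- for M = {pₙ} with d(pₙ,pₘ) = L + φ(n,m), under (i)–(iii) the
Lipschitz-free space F(M) contains no isometric copy of ℓ₁; via the
Ostrovska–Ostrovskii characterization this means: there is no sequence of pairwise
disjoint pairs (uₙ,vₙ) of distinct points of M such that every finite sub-collection
is a minimum-weight perfect matching (Σ d(uᵢ,vᵢ) ≤ Σ d(uᵢ,v_{σ(i)}) for all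
permutations σ). -/
theorem stmt12 {M : Type*} [MetricSpace M]
    (p : ℕ → M) (hinj : Function.Injective p) (hsurj : ∀ x : M, ∃ n, x = p n)
    (L : ℝ) (hL : 0 < L) (φ : ℕ → ℕ → ℝ) (ψ : ℕ → ℝ)
    (hsymm : ∀ n m, φ n m = φ m n)
    (hdist : ∀ n m, n ≠ m → dist (p n) (p m) = L + φ n m)
    (hψ : ∀ n, Tendsto (fun m => φ n m) atTop (nhds (ψ n)))
    (hgt : ∀ n m, n ≠ m → ψ n + ψ m < φ n m)
    (hliminf : ∀ ε > (0:ℝ), {x : ℕ × ℕ | x.1 ≠ x.2 ∧ φ x.1 x.2 < -ε}.Finite) :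
    ¬ ∃ u v : ℕ → M, (∀ n, u n ≠ v n) ∧
      (∀ n m, n ≠ m → u n ≠ u m ∧ u n ≠ v m ∧ v n ≠ v m ∧ v n ≠ u m) ∧
      (∀ (N : ℕ) (σ : Equiv.Perm (Fin N)),
        (∑ i : Fin N, dist (u i.1) (v i.1)) ≤ ∑ i : Fin N, dist (u i.1) (v (σ i).1)) :=
  stmt12_general p hsurj L φ ψ hdist hψ hgt hliminf
end

section
/- Let M be an infinite uniformly discrete pointed metric space containing a sequence of distinct points {pₙ} with (i) d(pₙ, 0) = R(pₙ) for all n, (ii) the sequence d(pₙ, 0) is decreasing and converges to some D > 0, and (iii) 2D ≤ d(pₙ, pₘ) for all n ≠ m. Then PNA(M) contains an isometric copy of c₀: with {rₙ} the primes in increasing order, the functions fₙ taking value D at each point p_{rₙ^m} (m ∈ ℕ) and 0 elsewhere are isometrically equivalent to the c₀-basis, and each ℓ∞-bounded c₀-combination Σ aₙ fₙ attains its pointwise norm at 0 with norm sup |aₙ|. -/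
open Filter Metric MeasureTheory

/-!
Off the points `pₖ` the function `F = ∑ aₙ fₙ` vanishes, and each `pₖ` lies at distance at least
`D` from every other point and at least `2D` from every other `pₗ`; since `|F| ≤ D · sup |aₙ|`,
every difference quotient of `F` is at most `sup |aₙ|`. Conversely, along `p_{rₙ^m}` (`m → ∞`)
the quotients at the base point are `|aₙ| D / d(p_{rₙ^m}, 0) → |aₙ|`, so the supremum is already
reached by the pointwise norm at the base point. Using the prime powers of distinct primes makes
the supports of the `fₙ` disjoint, so every sum has at most one nonzero term.
-/

open Set Function Topology

section DifferenceQuotients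

variable {M : Type*} [MetricSpace M] {f : M → ℝ} {A : ℝ}

lemma div_dist_le_of_abs_sub_le (hf : ∀ x y, |f y - f x| ≤ A * dist x y) {x y : M}
    (hxy : x ≠ y) : |f y - f x| / dist x y ≤ A :=
  (div_le_iff₀ (dist_pos.2 hxy)).2 (hf x y)

lemma lipNorm_le_of_abs_sub_le (hA : 0 ≤ A) (hf : ∀ x y, |f y - f x| ≤ A * dist x y) :
    lipNorm f ≤ A :=
  Real.sSup_le (by rintro _ ⟨x, y, hxy, rfl⟩; exact div_dist_le_of_abs_sub_le hf hxy) hA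

lemma div_dist_le_lipNorm (hf : ∀ x y, |f y - f x| ≤ A * dist x y) {x y : M} (hxy : x ≠ y) :
    |f y - f x| / dist x y ≤ lipNorm f :=
  le_csSup ⟨A, by rintro _ ⟨x, y, hxy, rfl⟩; exact div_dist_le_of_abs_sub_le hf hxy⟩
    ⟨x, y, hxy, rfl⟩

lemma pnormAt_le_lipNorm (hf : ∀ x y, |f y - f x| ≤ A * dist x y) (z : M) :
    pnormAt f z ≤ lipNorm f :=
  Real.sSup_le (by rintro _ ⟨q, hq, rfl⟩; exact div_dist_le_lipNorm hf hq.symm)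
    (Real.sSup_nonneg (by rintro _ ⟨x, y, -, rfl⟩; positivity))

lemma le_pnormAt_of_tendsto (hf : ∀ x y, |f y - f x| ≤ A * dist x y) {z : M} {q : ℕ → M}
    (hq : ∀ m, q m ≠ z) {c : ℝ}
    (hc : Tendsto (fun m => |f (q m) - f z| / dist z (q m)) atTop (𝓝 c)) :
    c ≤ pnormAt f z :=
  le_of_tendsto' hc fun m =>
    le_csSup ⟨A, by rintro _ ⟨q, hq, rfl⟩; exact div_dist_le_of_abs_sub_le hf hq.symm⟩
      ⟨q m, hq m, rfl⟩

lemma abs_sub_le_mul_dist_of_support_separated {T : Set M} {D : ℝ} (hA : 0 ≤ A)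
    (hsupp : ∀ x ∉ T, f x = 0) (hbound : ∀ x, |f x| ≤ A * D)
    (hfar : ∀ t ∈ T, ∀ x ≠ t, D ≤ dist t x)
    (hsep : ∀ t ∈ T, ∀ t' ∈ T, t ≠ t' → 2 * D ≤ dist t t') (x y : M) :
    |f y - f x| ≤ A * dist x y := by
  rcases eq_or_ne x y with rfl | hxy
  · simp
  by_cases hx : x ∈ T <;> by_cases hy : y ∈ T
  · calc |f y - f x| ≤ |f y| + |f x| := abs_sub _ _
      _ ≤ A * D + A * D := add_le_add (hbound y) (hbound x)
      _ = A * (2 * D) := by ring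
      _ ≤ A * dist x y := mul_le_mul_of_nonneg_left (hsep x hx y hy hxy) hA
  · calc |f y - f x| = |f x| := by rw [hsupp y hy, zero_sub, abs_neg]
      _ ≤ A * D := hbound x
      _ ≤ A * dist x y := mul_le_mul_of_nonneg_left (hfar x hx y hxy.symm) hA
  · calc |f y - f x| = |f y| := by rw [hsupp x hx, sub_zero]
      _ ≤ A * D := hbound y
      _ ≤ A * dist y x := mul_le_mul_of_nonneg_left (hfar y hy x hxy) hA
      _ = A * dist x y := by rw [dist_comm]
  · rw [hsupp x hx, hsupp y hy, sub_self, abs_zero]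
    positivity

end DifferenceQuotients

section DisjointIndicators

variable {ι α : Type*} {S : ι → Set α} (a : ι → ℝ) (c : ℝ) {x : α}

lemma hasSum_mul_indicator_of_mem (hS : Pairwise (Disjoint on S)) {n : ι} (hx : x ∈ S n) :
    HasSum (fun k => a k * (S k).indicator (fun _ => c) x) (a n * c) := by
  convert hasSum_single n fun k hk => ?_
  · rw [indicator_of_mem hx]
  · rw [indicator_of_notMem ((hS hk).notMem_of_mem_right hx), mul_zero]

lemma hasSum_mul_indicator_of_forall_notMem (hx : ∀ n, x ∉ S n) :
    HasSum (fun k => a k * (S k).indicator (fun _ => c) x) 0 := by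
  convert hasSum_zero with k
  rw [indicator_of_notMem (hx k), mul_zero]

lemma summable_mul_indicator (hS : Pairwise (Disjoint on S)) (x : α) :
    Summable fun k => a k * (S k).indicator (fun _ => c) x := by
  by_cases hx : ∃ n, x ∈ S n
  · obtain ⟨n, hn⟩ := hx
    exact (hasSum_mul_indicator_of_mem a c hS hn).summable
  · exact (hasSum_mul_indicator_of_forall_notMem a c (not_exists.1 hx)).summable

end DisjointIndicators

section PrimePowers

variable {α : Type*} {p : ℕ → α}

def primePowerPoints (p : ℕ → α) (n : ℕ) : Set α :=
  {y | ∃ m : ℕ, 1 ≤ m ∧ y = p (Nat.nth Nat.Prime n ^ m)}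

lemma primePowerPoints_subset_range (n : ℕ) : primePowerPoints p n ⊆ range p := by
  rintro _ ⟨m, -, rfl⟩
  exact mem_range_self _

lemma pairwise_disjoint_primePowerPoints (hp : Injective p) :
    Pairwise (Disjoint on primePowerPoints p) := by
  intro n n' hne
  refine disjoint_left.2 ?_
  rintro _ ⟨m, hm, rfl⟩ ⟨m', hm', h⟩
  have hpow := (Nat.prime_nth_prime n).pow_inj' (Nat.prime_nth_prime n') (by omega) (by omega)
    (hp h)
  exact hne (Nat.nth_injective Nat.infinite_setOfPred_prime hpow.1)

noncomputable def primePowerCombination (p : ℕ → α) (a : ℕ → ℝ) (D : ℝ) (x : α) : ℝ :=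
  ∑' n, a n * (primePowerPoints p n).indicator (fun _ => D) x

variable {a : ℕ → ℝ} {D : ℝ}

lemma primePowerCombination_of_mem (hp : Injective p) {n : ℕ} {x : α}
    (hx : x ∈ primePowerPoints p n) : primePowerCombination p a D x = a n * D :=
  (hasSum_mul_indicator_of_mem a D (pairwise_disjoint_primePowerPoints hp) hx).tsum_eq

lemma primePowerCombination_of_notMem_range {x : α} (hx : x ∉ range p) :
    primePowerCombination p a D x = 0 :=
  (hasSum_mul_indicator_of_forall_notMem a D
    fun n hn => hx (primePowerPoints_subset_range n hn)).tsum_eq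

lemma abs_primePowerCombination_le (hp : Injective p) (ha : BddAbove (range fun n => |a n|))
    (hD : 0 ≤ D) (x : α) : |primePowerCombination p a D x| ≤ (⨆ n, |a n|) * D := by
  by_cases hx : ∃ n, x ∈ primePowerPoints p n
  · obtain ⟨n, hn⟩ := hx
    rw [primePowerCombination_of_mem hp hn, abs_mul, abs_of_nonneg hD]
    exact mul_le_mul_of_nonneg_right (le_ciSup ha n) hD
  · rw [primePowerCombination,
      (hasSum_mul_indicator_of_forall_notMem a D (not_exists.1 hx)).tsum_eq, abs_zero]
    exact mul_nonneg (Real.iSup_nonneg fun n => abs_nonneg (a n)) hD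

lemma tendsto_primePowerCombination_div_dist [MetricSpace α] (hp : Injective p) {z : α}
    (hz : z ∉ range p) (hD : 0 < D) (hlim : Tendsto (fun k => dist (p k) z) atTop (𝓝 D))
    (n : ℕ) :
    Tendsto (fun m => |primePowerCombination p a D (p (Nat.nth Nat.Prime n ^ (m + 1))) -
        primePowerCombination p a D z| / dist z (p (Nat.nth Nat.Prime n ^ (m + 1))))
      atTop (𝓝 |a n|) := by
  have hpow : Tendsto (fun m => Nat.nth Nat.Prime n ^ (m + 1)) atTop atTop :=
    (tendsto_pow_atTop_atTop_of_one_lt (Nat.prime_nth_prime n).one_lt).comp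
      (tendsto_add_atTop_nat 1)
  have hquot := (tendsto_const_nhds (x := |a n| * D)).div (hlim.comp hpow) hD.ne'
  rw [mul_div_cancel_right₀ _ hD.ne'] at hquot
  refine hquot.congr fun m => ?_
  rw [primePowerCombination_of_mem hp ⟨m + 1, by omega, rfl⟩,
    primePowerCombination_of_notMem_range hz, sub_zero, abs_mul, abs_of_pos hD, dist_comm]
  rfl

end PrimePowers

theorem stmt15_general {M : Type*} [MetricSpace M] (z : M)
    (p : ℕ → M) (hinj : Function.Injective p)
    (D : ℝ) (hD : 0 < D)
    (hR : ∀ n, ∀ x : M, x ≠ p n → dist (p n) z ≤ dist (p n) x)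
    (hanti : ∀ n m : ℕ, n ≤ m → dist (p m) z ≤ dist (p n) z)
    (hlim : Tendsto (fun n => dist (p n) z) atTop (nhds D))
    (hsep : ∀ n m, n ≠ m → 2 * D ≤ dist (p n) (p m)) :
    ∀ a : ℕ → ℝ, Tendsto a atTop (nhds 0) → a ≠ 0 →
      ∀ F : M → ℝ,
        (∀ x : M, F x = ∑' n, a n *
          ({y : M | ∃ m : ℕ, 1 ≤ m ∧ y = p (Nat.nth Nat.Prime n ^ m)} : Set M).indicator
            (fun _ => D) x) →
        (∀ x : M, Summable fun n => a n *
          ({y : M | ∃ m : ℕ, 1 ≤ m ∧ y = p (Nat.nth Nat.Prime n ^ m)} : Set M).indicator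
            (fun _ => D) x) ∧
        lipNorm F = (⨆ n, |a n|) ∧ pnormAt F z = lipNorm F := by
  intro a ha _ F hF
  obtain rfl : F = primePowerCombination p a D := funext hF
  set A := ⨆ n, |a n|
  have hDle : ∀ k, D ≤ dist (p k) z :=
    Antitone.le_of_tendsto (fun n m h => hanti n m h) hlim
  have hz : z ∉ range p := by
    rintro ⟨k, rfl⟩
    simpa [hD.not_ge] using hDle k
  have hA : 0 ≤ A := Real.iSup_nonneg fun n => abs_nonneg (a n)
  have hbdd : BddAbove (range fun n => |a n|) := by
    simpa using ha.abs.bddAbove_range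
  have hlip : ∀ x y, |primePowerCombination p a D y - primePowerCombination p a D x| ≤
      A * dist x y := by
    refine abs_sub_le_mul_dist_of_support_separated hA
      (fun x hx => primePowerCombination_of_notMem_range hx)
      (abs_primePowerCombination_le hinj hbdd hD.le) ?_ ?_
    · rintro _ ⟨k, rfl⟩ x hx
      exact (hDle k).trans (hR k x hx)
    · rintro _ ⟨k, rfl⟩ _ ⟨l, rfl⟩ hkl
      exact hsep k l (ne_of_apply_ne p hkl)
  have hlower : A ≤ pnormAt (primePowerCombination p a D) z :=
    ciSup_le fun n => le_pnormAt_of_tendsto hlip (fun _ h => hz ⟨_, h⟩)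
      (tendsto_primePowerCombination_div_dist hinj hz hD hlim n)
  have hupper := lipNorm_le_of_abs_sub_le hA hlip
  have hmiddle := pnormAt_le_lipNorm hlip z
  exact ⟨summable_mul_indicator a D (pairwise_disjoint_primePowerPoints hinj),
    by linarith, by linarith⟩

/-- under (i)–(iii), the prime-power indexed functions
fₙ = D·1_{ {p_{rₙ^m} : m ≥ 1} } form an isometric c₀-basis in PNA(M), every nonzero
c₀-combination attaining its pointwise norm at the base point z with norm sup|aₙ|. -/
theorem stmt15 {M : Type*} [MetricSpace M] [Infinite M] (z : M)
    (hud : ∃ δ > (0:ℝ), ∀ p q : M, p ≠ q → δ ≤ dist p q)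
    (p : ℕ → M) (hinj : Function.Injective p)
    (D : ℝ) (hD : 0 < D)
    (hR : ∀ n, ∀ x : M, x ≠ p n → dist (p n) z ≤ dist (p n) x)
    (hanti : ∀ n m : ℕ, n ≤ m → dist (p m) z ≤ dist (p n) z)
    (hlim : Tendsto (fun n => dist (p n) z) atTop (nhds D))
    (hsep : ∀ n m, n ≠ m → 2 * D ≤ dist (p n) (p m)) :
    ∀ a : ℕ → ℝ, Tendsto a atTop (nhds 0) → a ≠ 0 →
      ∀ F : M → ℝ,
        (∀ x : M, F x = ∑' n, a n *
          ({y : M | ∃ m : ℕ, 1 ≤ m ∧ y = p (Nat.nth Nat.Prime n ^ m)} : Set M).indicator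
            (fun _ => D) x) →
        (∀ x : M, Summable fun n => a n *
          ({y : M | ∃ m : ℕ, 1 ≤ m ∧ y = p (Nat.nth Nat.Prime n ^ m)} : Set M).indicator
            (fun _ => D) x) ∧
        lipNorm F = (⨆ n, |a n|) ∧ pnormAt F z = lipNorm F :=
  stmt15_general z p hinj D hD hR hanti hlim hsep
end

section
/- Let M be an infinite pointed metric space and suppose there is a sequence {(pₙ, εₙ)} in M × [0,∞) such that (i) (d(pₙ,0) - εₙ + d(pₘ,0) - εₘ)/d(pₙ,pₘ) ≤ 1 for all n ≠ m, and for each fixed n this quantity tends to 1 as m → ∞, and (ii) 0 ≤ d(pₙ,0) - εₙ ≤ R(pₙ) for every n. Then PNA(M) contains an isometric copy of c₀. -/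
open Filter Metric MeasureTheory

/- ### Auxiliary construction -/

/-- the signed weight: positive at "heads" (second unpair coordinate 0), negative elsewhere. -/
noncomputable def wAux (c : ℕ → ℝ) (j : ℕ) : ℝ :=
  if (Nat.unpair j).2 = 0 then c j else -(c j)

lemma abs_wAux (c : ℕ → ℝ) (j : ℕ) (hc : 0 ≤ c j) : |wAux c j| = c j := by
  unfold wAux; split <;> simp [abs_of_nonneg hc]

open Classical in
/-- The c₀ basis functions. -/
noncomputable def fAux {M : Type*} [MetricSpace M] (q : ℕ → M) (c : ℕ → ℝ) (n : ℕ) (x : M) : ℝ :=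
  if h : ∃ j, (Nat.unpair j).1 = n ∧ q j = x then wAux c h.choose else 0

lemma fAux_apply {M : Type*} [MetricSpace M] {q : ℕ → M} (hq : Function.Injective q)
    (c : ℕ → ℝ) (j : ℕ) : fAux q c (Nat.unpair j).1 (q j) = wAux c j := by
  have h : ∃ j', (Nat.unpair j').1 = (Nat.unpair j).1 ∧ q j' = q j := ⟨j, rfl, rfl⟩
  unfold fAux
  rw [dif_pos h]
  congr 1
  exact hq h.choose_spec.2

lemma fAux_eq_zero_of_ne {M : Type*} [MetricSpace M] {q : ℕ → M} (hq : Function.Injective q)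
    (c : ℕ → ℝ) {n j : ℕ} (hn : (Nat.unpair j).1 ≠ n) : fAux q c n (q j) = 0 := by
  unfold fAux
  rw [dif_neg]
  rintro ⟨j', h1, h2⟩
  exact hn (hq h2 ▸ h1)

lemma fAux_eq_zero_of_not_mem {M : Type*} [MetricSpace M] (q : ℕ → M)
    (c : ℕ → ℝ) {n : ℕ} {x : M} (hx : ∀ j, q j ≠ x) : fAux q c n x = 0 := by
  unfold fAux
  rw [dif_neg]
  rintro ⟨j', _, h2⟩
  exact hx j' h2

/-- From a sequence all of whose fibers are eventually avoided, extract a strictly monotone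
subsequence along which the values are pairwise distinct. -/
lemma exists_subseq {M : Type*} (p : ℕ → M) (hfin : ∀ n, ∃ N, ∀ m, N ≤ m → p m ≠ p n) :
    ∃ φ : ℕ → ℕ, StrictMono φ ∧ Function.Injective (p ∘ φ) := by
  have key : ∀ b : ℕ, ∃ m, b < m ∧ ∀ i ≤ b, p m ≠ p i := by
    intro b
    choose N hN using hfin
    refine ⟨(Finset.range (b + 1)).sup N + b + 1, by omega, fun i hi => ?_⟩
    apply hN i
    have : N i ≤ (Finset.range (b + 1)).sup N :=
      Finset.le_sup (by simpa using Nat.lt_succ_of_le hi)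
    omega
  set φ : ℕ → ℕ := fun j => Nat.rec 0 (fun _ prev => (key prev).choose) j with hφ
  have hstep : ∀ j, φ j < φ (j + 1) ∧ ∀ i ≤ φ j, p (φ (j + 1)) ≠ p i := fun j =>
    ⟨(key (φ j)).choose_spec.1, (key (φ j)).choose_spec.2⟩
  have hmono : StrictMono φ := strictMono_nat_of_lt_succ fun j => (hstep j).1
  refine ⟨φ, hmono, ?_⟩
  have hne : ∀ j k, j < k → p (φ k) ≠ p (φ j) := by
    intro j k hjk
    obtain ⟨k, rfl⟩ : ∃ k', k = k' + 1 := ⟨k - 1, by omega⟩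
    exact (hstep k).2 (φ j) (hmono.monotone (by omega))
  intro j k h
  rcases lt_trichotomy j k with hlt | heq | hlt
  · exact absurd h.symm (hne j k hlt)
  · exact heq
  · exact absurd h (hne k j hlt)

/-- under conditions (i)–(ii) on the sequence (pₙ, εₙ), PNA(M) contains
an isometric copy of c₀. -/
theorem stmt16 {M : Type*} [MetricSpace M] [Infinite M] (z : M)
    (p : ℕ → M) (ε : ℕ → ℝ) (hε : ∀ n, 0 ≤ ε n)
    (hle : ∀ n m, n ≠ m →
      ((dist (p n) z - ε n) + (dist (p m) z - ε m)) / dist (p n) (p m) ≤ 1)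
    (hlim : ∀ n, Tendsto
      (fun m => ((dist (p n) z - ε n) + (dist (p m) z - ε m)) / dist (p n) (p m))
      atTop (nhds 1))
    (hpos : ∀ n, 0 ≤ dist (p n) z - ε n)
    (hR : ∀ n, ∀ x : M, x ≠ p n → dist (p n) z - ε n ≤ dist (p n) x) :
    ∃ f : ℕ → M → ℝ,
      ∀ a : ℕ → ℝ, Tendsto a atTop (nhds 0) → a ≠ 0 →
        (∀ x : M, Summable fun n => a n * f n x) ∧
        lipNorm (fun x => ∑' n, a n * f n x) = (⨆ n, |a n|) ∧
        PointwiseAttains (fun x => ∑' n, a n * f n x) := by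
  classical
  -- extract injective subsequence
  have hfin : ∀ n, ∃ N, ∀ m, N ≤ m → p m ≠ p n := by
    intro n
    have h2 := (hlim n).eventually (eventually_gt_nhds (by norm_num : (0:ℝ) < 1))
    rw [eventually_atTop] at h2
    obtain ⟨N, hN⟩ := h2
    refine ⟨N, fun m hm hpm => ?_⟩
    have := hN m hm
    rw [hpm] at this
    simp [dist_self] at this
  obtain ⟨φ, hφmono, hφinj⟩ := exists_subseq p hfin
  set q : ℕ → M := p ∘ φ with hqdef
  set c : ℕ → ℝ := fun j => dist (q j) z - ε (φ j) with hcdef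
  have hc0 : ∀ j, 0 ≤ c j := fun j => hpos (φ j)
  have hcd : ∀ j k, j ≠ k → c j + c k ≤ dist (q j) (q k) := by
    intro j k hjk
    have hne : q j ≠ q k := fun h => hjk (hφinj h)
    have hd : (0:ℝ) < dist (q j) (q k) := dist_pos.2 hne
    exact (div_le_one hd).mp (hle (φ j) (φ k) (fun h => hjk (hφmono.injective h)))
  have hcx : ∀ j (x : M), x ≠ q j → c j ≤ dist (q j) x := fun j x hx => hR (φ j) x hx
  have hclim : ∀ j, Tendsto (fun k => (c j + c k) / dist (q j) (q k)) atTop (nhds 1) := by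
    intro j
    exact (hlim (φ j)).comp hφmono.tendsto_atTop
  refine ⟨fAux q c, fun a ha hane => ?_⟩
  -- the max of |a|
  obtain ⟨n₁, hn₁⟩ : ∃ n, a n ≠ 0 := Function.ne_iff.mp hane
  obtain ⟨N, hN⟩ : ∃ N, ∀ n, N ≤ n → |a n| < |a n₁| := by
    obtain ⟨N, hN⟩ := (Metric.tendsto_atTop.mp ha) |a n₁| (abs_pos.2 hn₁)
    exact ⟨N, fun n hn => by simpa [Real.dist_eq] using hN n hn⟩
  obtain ⟨n₀, hn₀s, hmaxs⟩ := (insert n₁ (Finset.range N)).exists_max_image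
    (fun n => |a n|) ⟨n₁, Finset.mem_insert_self _ _⟩
  have hmax : ∀ n, |a n| ≤ |a n₀| := by
    intro n
    by_cases h : n ∈ insert n₁ (Finset.range N)
    · exact hmaxs n h
    · have hn : N ≤ n := by
        by_contra hc
        exact h (Finset.mem_insert_of_mem (Finset.mem_range.2 (by omega)))
      exact (hN n hn).le.trans (hmaxs n₁ (Finset.mem_insert_self _ _))
  set A : ℝ := |a n₀| with hAdef
  have hA0 : 0 ≤ A := abs_nonneg _
  have hAsup : (⨆ n, |a n|) = A :=
    le_antisymm (ciSup_le hmax) (le_ciSup ⟨A, by rintro r ⟨n, rfl⟩; exact hmax n⟩ n₀)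
  set g : M → ℝ := fun x => ∑' n, a n * fAux q c n x with hgdef
  -- values of g
  have hgval : ∀ j, g (q j) = a (Nat.unpair j).1 * wAux c j := by
    intro j
    show (∑' n, a n * fAux q c n (q j)) = a (Nat.unpair j).1 * wAux c j
    rw [tsum_eq_single (Nat.unpair j).1 (fun n hn => by
      rw [fAux_eq_zero_of_ne hφinj c (Ne.symm hn), mul_zero])]
    rw [fAux_apply hφinj]
  have hgzero : ∀ x : M, (∀ j, q j ≠ x) → g x = 0 := by
    intro x hx
    show (∑' n, a n * fAux q c n x) = 0
    have h0 : (fun n => a n * fAux q c n x) = fun _ => 0 := by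
      funext n
      rw [fAux_eq_zero_of_not_mem q c hx, mul_zero]
    rw [h0]
    exact tsum_zero
  -- summability
  have hsummable : ∀ x : M, Summable fun n => a n * fAux q c n x := by
    intro x
    by_cases hx : ∃ j, q j = x
    · obtain ⟨j, rfl⟩ := hx
      apply summable_of_ne_finset_zero (s := {(Nat.unpair j).1})
      intro n hn
      rw [fAux_eq_zero_of_ne hφinj c (fun h => hn (by simp [h])), mul_zero]
    · push_neg at hx
      apply summable_of_ne_finset_zero (s := (∅ : Finset ℕ))
      intro n _
      rw [fAux_eq_zero_of_not_mem q c hx, mul_zero]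
  -- the key Lipschitz bound
  have hbound : ∀ x y : M, x ≠ y → |g y - g x| ≤ A * dist x y := by
    intro x y hxy
    by_cases hx : ∃ j, q j = x
    · obtain ⟨j, rfl⟩ := hx
      by_cases hy : ∃ k, q k = y
      · obtain ⟨k, rfl⟩ := hy
        have hjk : j ≠ k := fun h => hxy (by rw [h])
        rw [hgval j, hgval k]
        calc |a (Nat.unpair k).1 * wAux c k - a (Nat.unpair j).1 * wAux c j|
            ≤ |a (Nat.unpair k).1 * wAux c k| + |a (Nat.unpair j).1 * wAux c j| :=
              abs_sub _ _
          _ = |a (Nat.unpair k).1| * c k + |a (Nat.unpair j).1| * c j := by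
              rw [abs_mul, abs_mul, abs_wAux c k (hc0 k), abs_wAux c j (hc0 j)]
          _ ≤ A * c k + A * c j :=
              add_le_add (mul_le_mul_of_nonneg_right (hmax _) (hc0 _))
                (mul_le_mul_of_nonneg_right (hmax _) (hc0 _))
          _ = A * (c j + c k) := by ring
          _ ≤ A * dist (q j) (q k) := mul_le_mul_of_nonneg_left (hcd j k hjk) hA0
      · push_neg at hy
        rw [hgval j, hgzero y hy]
        rw [zero_sub, abs_neg, abs_mul, abs_wAux c j (hc0 j)]
        calc |a (Nat.unpair j).1| * c j ≤ A * c j :=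
              mul_le_mul_of_nonneg_right (hmax _) (hc0 _)
          _ ≤ A * dist (q j) y :=
              mul_le_mul_of_nonneg_left (hcx j y (fun h => hy j h.symm)) hA0
    · push_neg at hx
      by_cases hy : ∃ k, q k = y
      · obtain ⟨k, rfl⟩ := hy
        rw [hgzero x hx, hgval k]
        rw [sub_zero, abs_mul, abs_wAux c k (hc0 k)]
        calc |a (Nat.unpair k).1| * c k ≤ A * c k :=
              mul_le_mul_of_nonneg_right (hmax _) (hc0 _)
          _ ≤ A * dist (q k) x :=
              mul_le_mul_of_nonneg_left (hcx k x (fun h => hx k h.symm)) hA0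
          _ = A * dist x (q k) := by rw [dist_comm]
      · push_neg at hy
        rw [hgzero x hx, hgzero y hy]
        simpa using mul_nonneg hA0 dist_nonneg
  have hratio : ∀ x y : M, x ≠ y → |g y - g x| / dist x y ≤ A := by
    intro x y hxy
    rw [div_le_iff₀ (dist_pos.2 hxy)]
    exact hbound x y hxy
  -- lipNorm set and bound
  set L : Set ℝ := {r : ℝ | ∃ x y : M, x ≠ y ∧ r = |g y - g x| / dist x y} with hLdef
  have hlipL : lipNorm g = sSup L := rfl
  have hLbound : ∀ r ∈ L, r ≤ A := by
    rintro r ⟨x, y, hxy, rfl⟩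
    exact hratio x y hxy
  have hLbdd : BddAbove L := ⟨A, hLbound⟩
  obtain ⟨x₀, y₀, hx₀y₀⟩ := exists_pair_ne M
  have hLne : L.Nonempty := ⟨_, x₀, y₀, hx₀y₀, rfl⟩
  have hliple : lipNorm g ≤ A := by rw [hlipL]; exact csSup_le hLne hLbound
  -- the distinguished point
  set H : ℕ := Nat.pair n₀ 0 with hHdef
  set P : Set ℝ := {r : ℝ | ∃ x : M, x ≠ q H ∧ r = |g x - g (q H)| / dist (q H) x} with hPdef
  have hpnormP : pnormAt g (q H) = sSup P := rfl
  have hPsub : P ⊆ L := by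
    rintro r ⟨x, hx, rfl⟩
    exact ⟨q H, x, hx.symm, rfl⟩
  obtain ⟨x₁, hx₁⟩ := exists_ne (q H)
  have hPne : P.Nonempty := ⟨_, x₁, hx₁, rfl⟩
  -- the tail sequence
  have hKle : ∀ m : ℕ, m ≤ Nat.pair n₀ (m + 1) :=
    fun m => le_trans (Nat.le_succ m) (Nat.right_le_pair _ _)
  have hKtend : Tendsto (fun m => Nat.pair n₀ (m + 1)) atTop atTop :=
    tendsto_atTop_mono hKle tendsto_id
  have hgH : g (q H) = a n₀ * c H := by
    rw [hgval H]
    simp [wAux, hHdef, Nat.unpair_pair]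
  have hgT : ∀ m : ℕ, g (q (Nat.pair n₀ (m + 1))) = a n₀ * (-(c (Nat.pair n₀ (m + 1)))) := by
    intro m
    rw [hgval]
    simp [wAux, Nat.unpair_pair]
  have hrform : ∀ m : ℕ,
      |g (q (Nat.pair n₀ (m + 1))) - g (q H)| / dist (q H) (q (Nat.pair n₀ (m + 1)))
        = A * ((c H + c (Nat.pair n₀ (m + 1))) / dist (q H) (q (Nat.pair n₀ (m + 1)))) := by
    intro m
    rw [hgT m, hgH]
    have h1 : a n₀ * (-(c (Nat.pair n₀ (m + 1)))) - a n₀ * c H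
        = -(a n₀ * (c H + c (Nat.pair n₀ (m + 1)))) := by ring
    rw [h1, abs_neg, abs_mul,
      abs_of_nonneg (add_nonneg (hc0 H) (hc0 (Nat.pair n₀ (m+1)))), mul_div_assoc]
  have hrtend : Tendsto
      (fun m => |g (q (Nat.pair n₀ (m + 1))) - g (q H)| / dist (q H) (q (Nat.pair n₀ (m + 1))))
      atTop (nhds A) := by
    have h2 : Tendsto (fun m => (c H + c (Nat.pair n₀ (m + 1))) /
        dist (q H) (q (Nat.pair n₀ (m + 1)))) atTop (nhds 1) :=
      (hclim H).comp hKtend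
    have h3 := (tendsto_const_nhds (x := A) (f := atTop)).mul h2
    rw [mul_one] at h3
    exact h3.congr (fun m => (hrform m).symm)
  have hrmem : ∀ m : ℕ,
      |g (q (Nat.pair n₀ (m + 1))) - g (q H)| / dist (q H) (q (Nat.pair n₀ (m + 1))) ∈ P := by
    intro m
    refine ⟨q (Nat.pair n₀ (m + 1)), ?_, rfl⟩
    intro h
    have h2 := hφinj h
    rw [hHdef] at h2
    exact absurd (Nat.pair_eq_pair.mp h2).2 (by omega)
  have hPbdd : BddAbove P := hLbdd.mono hPsub
  have hAleP : A ≤ sSup P :=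
    le_of_tendsto hrtend (Eventually.of_forall fun m => le_csSup hPbdd (hrmem m))
  have hPleL : sSup P ≤ sSup L := csSup_le_csSup hLbdd hPne hPsub
  have hlipeq : lipNorm g = A := le_antisymm hliple (by rw [hlipL]; exact le_trans hAleP hPleL)
  refine ⟨hsummable, by rw [hAsup]; exact hlipeq, ⟨q H, ?_⟩⟩
  have hpnorm : pnormAt g (q H) = A := by
    rw [hpnormP]
    refine le_antisymm (csSup_le hPne ?_) hAleP
    rintro r ⟨x, hx, rfl⟩
    exact hratio (q H) x (fun h => hx h.symm)
  rw [hpnorm, hlipeq]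
end

section
/- Let M be a pointed metric space and suppose (gₙ) is a sequence in SNA(M) isometrically equivalent to the canonical basis of ℓ₁ (i.e., ‖Σₙ aₙ gₙ‖ = Σₙ |aₙ| for all (aₙ) ∈ ℓ₁, and each nonzero ℓ₁-combination lies in SNA(M)). If f = Σₙ aₙ gₙ satisfies (f(q)-f(p))/d(p,q) = ‖f‖ for distinct points p, q, then for every index n with aₙ ≠ 0 one has (gₙ(q)-gₙ(p))/d(p,q) = sign(aₙ). Consequently, if (aₙ) has at least two nonzero entries a_i, a_j and (bₙ) is obtained from (aₙ) by flipping the sign of a_j only, then g = Σₙ bₙ gₙ does not strongly attain its norm at the pair (p,q) (in either order). -/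
open Filter Metric MeasureTheory

/-!
Put `uₙ = S(gₙ, p, q)`. Since every `gₙ` has norm one, `|uₙ| ≤ 1`, so `aₙ uₙ ≤ |aₙ|` termwise;
strong attainment of `f` at `(p, q)` says `Σ aₙ uₙ = Σ |aₙ|`, which forces `aₙ uₙ = |aₙ|` for
every `n`, i.e. `uₙ = sign aₙ` when `aₙ ≠ 0`. Flipping the sign of `a_j` then changes the slope to
`Σ |aₙ| - 2 |a_j|`, whose absolute value is strictly below `Σ |aₙ|`, the norm of the new
combination, as soon as some other `a_i` is nonzero.
-/

section CoefficientSequences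

variable {c u : ℕ → ℝ}

lemma summable_mul_of_abs_le_one (hc : Summable fun n => |c n|) (hu : ∀ n, |u n| ≤ 1) :
    Summable fun n => c n * u n :=
  hc.of_norm_bounded fun n => by
    rw [Real.norm_eq_abs, abs_mul]
    exact mul_le_of_le_one_right (abs_nonneg _) (hu n)

lemma mul_eq_abs_of_tsum_mul_eq_tsum_abs (hc : Summable fun n => |c n|) (hu : ∀ n, |u n| ≤ 1)
    (hsum : ∑' n, c n * u n = ∑' n, |c n|) (n : ℕ) : c n * u n = |c n| := by
  have hle : ∀ m, c m * u m ≤ |c m| := fun m =>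
    (le_abs_self _).trans (by rw [abs_mul]; exact mul_le_of_le_one_right (abs_nonneg _) (hu m))
  by_contra hne
  exact (Summable.tsum_lt_tsum hle ((hle n).lt_of_ne hne)
    (summable_mul_of_abs_le_one hc hu) hc).ne hsum

lemma eq_sign_of_tsum_mul_eq_tsum_abs (hc : Summable fun n => |c n|) (hu : ∀ n, |u n| ≤ 1)
    (hsum : ∑' n, c n * u n = ∑' n, |c n|) {n : ℕ} (hn : c n ≠ 0) : u n = Real.sign (c n) := by
  have h := mul_eq_abs_of_tsum_mul_eq_tsum_abs hc hu hsum n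
  apply mul_left_cancel₀ hn
  rcases hn.lt_or_gt with hneg | hpos
  · rw [abs_of_neg hneg] at h
    rw [Real.sign_of_neg hneg]
    linarith
  · rw [abs_of_pos hpos] at h
    rw [Real.sign_of_pos hpos]
    linarith

lemma abs_tsum_update_neg_mul_lt (hc : Summable fun n => |c n|) (hu : ∀ n, |u n| ≤ 1)
    (hsum : ∑' n, c n * u n = ∑' n, |c n|) {i j : ℕ} (hij : i ≠ j) (hi : c i ≠ 0)
    (hj : c j ≠ 0) :
    |∑' n, Function.update c j (-c j) n * u n| < ∑' n, |c n| := by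
  have hflip : (fun n => Function.update c j (-c j) n * u n) =
      Function.update (fun n => c n * u n) j (-(c j * u j)) := by
    ext n
    rcases eq_or_ne n j with rfl | hnj
    · simp
    · simp [Function.update_of_ne hnj]
  have hvalue : ∑' n, Function.update c j (-c j) n * u n = ∑' n, |c n| - 2 * |c j| := by
    rw [hflip, ((summable_mul_of_abs_le_one hc hu).hasSum.update j _).tsum_eq, ← hsum,
      mul_eq_abs_of_tsum_mul_eq_tsum_abs hc hu hsum j]
    ring
  have hpair : |c i| + |c j| ≤ ∑' n, |c n| := by
    simpa [Finset.sum_pair hij] using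
      hc.sum_le_tsum {i, j} (fun m _ => abs_nonneg (c m))
  have hi' := abs_pos.2 hi
  have hj' := abs_pos.2 hj
  rw [hvalue, abs_lt]
  constructor <;> linarith

end CoefficientSequences

lemma abs_sub_le_lipNorm_mul_dist {M : Type*} [MetricSpace M] {f : M → ℝ}
    (hf : 0 < lipNorm f) (x y : M) : |f y - f x| ≤ lipNorm f * dist x y := by
  rcases eq_or_ne x y with rfl | hxy
  · simp
  have hbdd : BddAbove {r : ℝ | ∃ p q : M, p ≠ q ∧ r = |f q - f p| / dist p q} := by
    -- an unbounded set of reals has `sSup = 0`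
    by_contra hunbdd
    exact hf.ne' (Real.sSup_of_not_bddAbove hunbdd)
  rw [← div_le_iff₀ (dist_pos.2 hxy)]
  exact le_csSup hbdd ⟨x, y, hxy, rfl⟩

section IsometricL1Sequence

variable {M : Type*} [MetricSpace M] {g : ℕ → M → ℝ}

lemma abs_sub_le_dist_of_lipNorm_eq_tsum_abs
    (hnorm : ∀ b : ℕ → ℝ, Summable (fun n => |b n|) → b ≠ 0 →
      lipNorm (fun x => ∑' n, b n * g n x) = ∑' n, |b n|)
    (n : ℕ) (x y : M) : |g n y - g n x| ≤ dist x y := by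
  have hunit : lipNorm (g n) = 1 := by
    simpa [Pi.single_apply, apply_ite] using hnorm (Pi.single n 1)
      (summable_of_ne_finset_zero (s := {n}) fun m hm => by simp [Finset.mem_singleton.not.1 hm])
      (by simp)
  simpa [hunit] using abs_sub_le_lipNorm_mul_dist (f := g n) (by simp [hunit]) x y

lemma summable_mul_apply_of_abs_sub_le_dist {z : M} (hg0 : ∀ n, g n z = 0)
    (hlip : ∀ n x y, |g n y - g n x| ≤ dist x y)
    {c : ℕ → ℝ} (hc : Summable fun n => |c n|) (x : M) :
    Summable fun n => c n * g n x :=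
  (hc.mul_right (dist z x)).of_norm_bounded fun n => by
    rw [Real.norm_eq_abs, abs_mul]
    exact mul_le_mul_of_nonneg_left (by simpa [hg0 n] using hlip n z x) (abs_nonneg _)

lemma tsum_sub_tsum_div_dist {z : M} (hg0 : ∀ n, g n z = 0)
    (hlip : ∀ n x y, |g n y - g n x| ≤ dist x y)
    {c : ℕ → ℝ} (hc : Summable fun n => |c n|) (p q : M) :
    ((∑' n, c n * g n q) - ∑' n, c n * g n p) / dist p q =
      ∑' n, c n * ((g n q - g n p) / dist p q) := by
  rw [← Summable.tsum_sub (summable_mul_apply_of_abs_sub_le_dist hg0 hlip hc q)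
    (summable_mul_apply_of_abs_sub_le_dist hg0 hlip hc p), ← tsum_div_const]
  congr 1
  ext n
  ring

end IsometricL1Sequence

/-- if (gₙ) ⊆ SNA(M) is isometrically equivalent to the ℓ₁-basis and
f = Σ aₙ gₙ satisfies S(f,p,q) = ‖f‖, then S(gₙ,p,q) = sign(aₙ) whenever aₙ ≠ 0;
consequently flipping the sign of one nonzero coefficient destroys strong attainment
at the pair (p,q) (in either order). -/
theorem stmt17 {M : Type*} [MetricSpace M] (z : M)
    (g : ℕ → M → ℝ) (hg0 : ∀ n, g n z = 0)
    (hiso : ∀ b : ℕ → ℝ, Summable (fun n => |b n|) → b ≠ 0 →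
      lipNorm (fun x => ∑' n, b n * g n x) = (∑' n, |b n|) ∧
      StronglyAttains (fun x => ∑' n, b n * g n x))
    (a : ℕ → ℝ) (ha : Summable fun n => |a n|)
    (p q : M) (hpq : p ≠ q)
    (hatt : ((∑' n, a n * g n q) - (∑' n, a n * g n p)) / dist p q =
      lipNorm (fun x => ∑' n, a n * g n x)) :
    (∀ n, a n ≠ 0 → (g n q - g n p) / dist p q = Real.sign (a n)) ∧
    (∀ i j, i ≠ j → a i ≠ 0 → a j ≠ 0 →
      ∀ b : ℕ → ℝ, b = Function.update a j (-(a j)) →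
        |(∑' n, b n * g n q) - (∑' n, b n * g n p)| / dist p q ≠
          lipNorm (fun x => ∑' n, b n * g n x)) := by
  have hnorm b hb hb0 := (hiso b hb hb0).1
  have hlip := abs_sub_le_dist_of_lipNorm_eq_tsum_abs hnorm
  have hd := dist_pos.2 hpq
  have hu n : |(g n q - g n p) / dist p q| ≤ 1 := by
    rw [abs_div, abs_of_pos hd, div_le_one hd]
    exact hlip n p q
  have hsum : ∑' n, a n * ((g n q - g n p) / dist p q) = ∑' n, |a n| := by
    rcases eq_or_ne a 0 with rfl | ha0
    · simp
    · rw [← tsum_sub_tsum_div_dist hg0 hlip ha, hatt, hnorm a ha ha0]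
  refine ⟨fun n hn => eq_sign_of_tsum_mul_eq_tsum_abs ha hu hsum hn, ?_⟩
  rintro i j hij hi hj b rfl
  have hb_abs : (fun n => |Function.update a j (-a j) n|) = fun n => |a n| := by
    ext n
    rcases eq_or_ne n j with rfl | hnj
    · simp
    · simp [Function.update_of_ne hnj]
  have hb0 : Function.update a j (-a j) ≠ 0 := fun h =>
    hi (by simpa [Function.update_of_ne hij] using congrFun h i)
  have hb : Summable fun n => |Function.update a j (-a j) n| := hb_abs ▸ ha
  rw [hnorm _ hb hb0, hb_abs, ← abs_of_pos hd, ← abs_div, tsum_sub_tsum_div_dist hg0 hlip hb]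
  exact (abs_tsum_update_neg_mul_lt ha hu hsum hij hi hj).ne
end

section
/- Let M be a pointed metric space such that SNA(M) contains an isometric copy of ℓ₁ (a linear isometry T : ℓ₁ → Lip₀(M) with T(x) ∈ SNA(M) for all x ≠ 0). Then M is uncountable. More precisely, fixing (aₙ) ∈ ℓ₁ with all aₙ > 0, the map assigning to each sign sequence s ∈ {-1,1}^ℕ a pair of distinct points at which Σₙ sₙ aₙ T(eₙ) strongly attains its norm is injective on sign sequences up to global sign, so M̃ (hence M) has cardinality at least that of the continuum modulo ±. -/
open Filter Metric MeasureTheory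

section Aux

variable {M : Type*} [MetricSpace M]

/-- If `lipNorm f = c ≠ 0` then every slope is bounded by `c`. -/
lemma aux_ratio_le (f : M → ℝ) (c : ℝ) (hc : lipNorm f = c) (hc0 : c ≠ 0)
    (p q : M) (hpq : p ≠ q) : |f q - f p| ≤ c * dist p q := by
  have hd : (0:ℝ) < dist p q := dist_pos.mpr hpq
  have hmem : |f q - f p| / dist p q ∈
      {r : ℝ | ∃ p q : M, p ≠ q ∧ r = |f q - f p| / dist p q} := ⟨p, q, hpq, rfl⟩
  have hbdd : BddAbove {r : ℝ | ∃ p q : M, p ≠ q ∧ r = |f q - f p| / dist p q} := by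
    by_contra h
    rw [lipNorm, Real.sSup_of_not_bddAbove h] at hc
    exact hc0 hc.symm
  have hle : |f q - f p| / dist p q ≤ c := by
    rw [← hc, lipNorm]; exact le_csSup hbdd hmem
  calc |f q - f p| = (|f q - f p| / dist p q) * dist p q := by field_simp
  _ ≤ c * dist p q := by exact mul_le_mul_of_nonneg_right hle hd.le

lemma aux_lipNorm_g (g : ℕ → M → ℝ)
    (hiso : ∀ b : ℕ → ℝ, Summable (fun n => |b n|) → b ≠ 0 →
      lipNorm (fun x => ∑' n, b n * g n x) = (∑' n, |b n|) ∧
      StronglyAttains (fun x => ∑' n, b n * g n x)) (n : ℕ) :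
    lipNorm (g n) = 1 := by
  classical
  set b : ℕ → ℝ := fun m => if m = n then 1 else 0 with hb
  have hsum : Summable (fun m => |b m|) := by
    have h : (fun m => |b m|) = fun m => if m = n then (1:ℝ) else 0 := by
      funext m; simp only [hb]; split <;> simp
    rw [h]; exact (hasSum_ite_eq n 1).summable
  have hb0 : b ≠ 0 := by
    intro h; have := congrFun h n; simp [hb] at this
  have h := (hiso b hsum hb0).1
  have h1 : (fun x => ∑' m, b m * g m x) = g n := by
    funext x
    have h' : ∀ m, b m * g m x = if m = n then g n x else 0 := by
      intro m; simp only [hb]; split <;> simp_all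
    rw [tsum_congr h', tsum_ite_eq]
  have h2 : (∑' m, |b m|) = 1 := by
    have h' : ∀ m, |b m| = if m = n then (1:ℝ) else 0 := by
      intro m; simp only [hb]; split <;> simp
    rw [tsum_congr h', tsum_ite_eq]
  rw [h1, h2] at h; exact h

/-- Key lemma: if `f_s` strongly attains at `(p,q)` then every slope of `g n` at `(p,q)`
is `ε * s n` for one fixed global sign `ε`. -/
lemma aux_key (z : M) (g : ℕ → M → ℝ) (hg0 : ∀ n, g n z = 0)
    (hiso : ∀ b : ℕ → ℝ, Summable (fun n => |b n|) → b ≠ 0 →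
      lipNorm (fun x => ∑' n, b n * g n x) = (∑' n, |b n|) ∧
      StronglyAttains (fun x => ∑' n, b n * g n x))
    (a : ℕ → ℝ) (ha : ∀ n, 0 < a n) (hsa : Summable a)
    (s : ℕ → ℝ) (hs : ∀ n, s n = 1 ∨ s n = -1)
    (p q : M) (hpq : p ≠ q)
    (hat : |(∑' n, s n * a n * g n q) - (∑' n, s n * a n * g n p)| / dist p q =
      lipNorm (fun x => ∑' n, s n * a n * g n x)) :
    ∃ ε : ℝ, (ε = 1 ∨ ε = -1) ∧ ∀ n, g n q - g n p = ε * s n * dist p q := by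
  have hd : (0:ℝ) < dist p q := dist_pos.mpr hpq
  have hsabs : ∀ n, |s n| = 1 := by
    intro n; rcases hs n with h | h <;> rw [h] <;> norm_num
  -- bounds on g
  have hgb : ∀ n x, |g n x| ≤ dist z x := by
    intro n x
    by_cases hx : x = z
    · simp [hx, hg0]
    · have := aux_ratio_le (g n) 1 (aux_lipNorm_g g hiso n) one_ne_zero z x
        (fun h => hx h.symm)
      rw [hg0 n, sub_zero, one_mul] at this
      exact this
  have hgd : ∀ n, |g n q - g n p| ≤ dist p q := by
    intro n
    have := aux_ratio_le (g n) 1 (aux_lipNorm_g g hiso n) one_ne_zero p q hpq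
    rwa [one_mul] at this
  -- summability
  have hsum_x : ∀ x : M, Summable (fun n => s n * a n * g n x) := by
    intro x
    apply Summable.of_abs
    apply Summable.of_nonneg_of_le (fun n => abs_nonneg _)
      (f := fun n => a n * dist z x)
    · intro n
      rw [abs_mul, abs_mul, hsabs, one_mul, abs_of_pos (ha n)]
      exact mul_le_mul_of_nonneg_left (hgb n x) (ha n).le
    · exact hsa.mul_right _
  have hsumΔ : Summable (fun n => s n * a n * (g n q - g n p)) := by
    have h : (fun n => s n * a n * (g n q - g n p)) =
        fun n => s n * a n * g n q - s n * a n * g n p := by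
      funext n; ring
    rw [h]; exact (hsum_x q).sub (hsum_x p)
  -- identify the norm
  set b : ℕ → ℝ := fun n => s n * a n with hb
  have hbsum : Summable (fun n => |b n|) := by
    have h : (fun n => |b n|) = a := by
      funext n; rw [hb]; rw [abs_mul, hsabs, one_mul, abs_of_pos (ha n)]
    rw [h]; exact hsa
  have hbne : b ≠ 0 := by
    intro h
    have := congrFun h 0
    simp only [hb, Pi.zero_apply] at this
    rcases hs 0 with h0 | h0 <;> rw [h0] at this <;> nlinarith [ha 0]
  have hnorm := (hiso b hbsum hbne).1
  have hbabs : (∑' n, |b n|) = ∑' n, a n := by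
    apply tsum_congr; intro n
    rw [hb, abs_mul, hsabs, one_mul, abs_of_pos (ha n)]
  -- the difference as a series
  have hX : (∑' n, s n * a n * g n q) - (∑' n, s n * a n * g n p) =
      ∑' n, s n * a n * (g n q - g n p) := by
    rw [← Summable.tsum_sub (hsum_x q) (hsum_x p)]
    apply tsum_congr; intro n; ring
  set X : ℝ := (∑' n, s n * a n * g n q) - (∑' n, s n * a n * g n p) with hXdef
  have hat' : |X| = (∑' n, a n) * dist p q := by
    have := hat
    rw [hnorm, hbabs] at this
    rw [← this]; field_simp
  set ε : ℝ := if 0 ≤ X then 1 else -1 with hε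
  have hεcases : ε = 1 ∨ ε = -1 := by
    rw [hε]; split <;> simp
  have hεX : ε * X = |X| := by
    rw [hε]; split
    · rw [one_mul, abs_of_nonneg ‹_›]
    · rw [neg_one_mul, abs_of_neg (lt_of_not_ge ‹_›)]
  -- the nonnegative series summing to zero
  set h : ℕ → ℝ := fun n => a n * dist p q - ε * (s n * a n * (g n q - g n p)) with hhdef
  have hhsum : Summable h := by
    apply Summable.sub (hsa.mul_right _)
    exact (hsumΔ.mul_left ε)
  have hhnn : ∀ n, 0 ≤ h n := by
    intro n
    have h1 : |ε * (s n * a n * (g n q - g n p))| ≤ a n * dist p q := by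
      rw [abs_mul, abs_mul, abs_mul, hsabs, one_mul, abs_of_pos (ha n)]
      have hεabs : |ε| = 1 := by rcases hεcases with h | h <;> rw [h] <;> norm_num
      rw [hεabs, one_mul]
      exact mul_le_mul_of_nonneg_left (hgd n) (ha n).le
    have := neg_abs_le (ε * (s n * a n * (g n q - g n p)))
    simp only [hhdef]
    nlinarith [abs_le.mp h1]
  have hhzero : (∑' n, h n) = 0 := by
    simp only [hhdef]
    rw [Summable.tsum_sub (hsa.mul_right _) (hsumΔ.mul_left ε), tsum_mul_right, tsum_mul_left]
    rw [← hX, hεX, hat']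
    ring
  have heach : ∀ n, h n = 0 := by
    intro n
    have hle := Summable.le_tsum hhsum n (fun j _ => hhnn j)
    rw [hhzero] at hle
    exact le_antisymm hle (hhnn n)
  refine ⟨ε, hεcases, fun n => ?_⟩
  have hn := heach n
  simp only [hhdef] at hn
  have han := (ha n).ne'
  rcases hεcases with hε1 | hε1 <;> rcases hs n with hs1 | hs1 <;>
    rw [hε1, hs1] at hn ⊢ <;> nlinarith [ha n, hn]

end Aux

/-- if SNA(M) contains an isometric copy of ℓ₁, then M is uncountable;
more precisely, for a fixed positive ℓ₁-sequence a, sign sequences s that are not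
equal up to global sign yield f_s = Σ sₙaₙgₙ strongly attaining at necessarily
different pairs of points. -/
theorem stmt18 {M : Type*} [MetricSpace M] (z : M)
    (g : ℕ → M → ℝ) (hg0 : ∀ n, g n z = 0)
    (hiso : ∀ b : ℕ → ℝ, Summable (fun n => |b n|) → b ≠ 0 →
      lipNorm (fun x => ∑' n, b n * g n x) = (∑' n, |b n|) ∧
      StronglyAttains (fun x => ∑' n, b n * g n x)) :
    ¬ Countable M ∧
    (∀ a : ℕ → ℝ, (∀ n, 0 < a n) → Summable a →
      ∀ s t : ℕ → ℝ, (∀ n, s n = 1 ∨ s n = -1) → (∀ n, t n = 1 ∨ t n = -1) →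
        (∃ i, s i = t i) → (∃ j, s j = -t j) →
        ∀ p q : M, p ≠ q →
          |(∑' n, s n * a n * g n q) - (∑' n, s n * a n * g n p)| / dist p q =
            lipNorm (fun x => ∑' n, s n * a n * g n x) →
          |(∑' n, t n * a n * g n q) - (∑' n, t n * a n * g n p)| / dist p q ≠
            lipNorm (fun x => ∑' n, t n * a n * g n x)) := by
  classical
  constructor
  · -- uncountability
    intro hC
    -- fixed positive summable sequence
    set a : ℕ → ℝ := fun n => (1/2 : ℝ)^n with hadef
    have ha : ∀ n, 0 < a n := fun n => by positivity
    have hsa : Summable a := summable_geometric_of_lt_one (by norm_num) (by norm_num)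
    -- sign sequence attached to a set of naturals, with first coordinate 1
    set sg : Set ℕ → ℕ → ℝ := fun b n =>
      match n with
      | 0 => 1
      | k+1 => if k ∈ b then 1 else -1 with hsg
    have hsgs : ∀ b n, sg b n = 1 ∨ sg b n = -1 := by
      intro b n
      match n with
      | 0 => left; rfl
      | k+1 => simp only [hsg]; split <;> simp
    have hsgabs : ∀ b n, |sg b n| = 1 := by
      intro b n; rcases hsgs b n with h | h <;> rw [h] <;> norm_num
    -- the associated function strongly attains
    have hattain : ∀ b : Set ℕ,
        StronglyAttains (fun x => ∑' n, sg b n * a n * g n x) := by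
      intro b
      have hbsum : Summable (fun n => |sg b n * a n|) := by
        have h : (fun n => |sg b n * a n|) = a := by
          funext n; rw [abs_mul, hsgabs, one_mul, abs_of_pos (ha n)]
        rw [h]; exact hsa
      have hbne : (fun n => sg b n * a n) ≠ 0 := by
        intro h
        have := congrFun h 0
        simp only [Pi.zero_apply] at this
        rcases hsgs b 0 with h0 | h0 <;> rw [h0] at this <;> nlinarith [ha 0]
      exact (hiso _ hbsum hbne).2
    -- choose attaining pairs
    choose P Q hPQ hPQat using hattain
    -- injectivity into M × M
    have hinj : Function.Injective (fun b : Set ℕ => (P b, Q b)) := by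
      intro b c hbc
      have hP : P b = P c := congrArg Prod.fst hbc
      have hQ : Q b = Q c := congrArg Prod.snd hbc
      obtain ⟨ε, hε, hεeq⟩ := aux_key z g hg0 hiso a ha hsa (sg b) (hsgs b)
        (P b) (Q b) (hPQ b) (hPQat b)
      obtain ⟨ε', hε', hε'eq⟩ := aux_key z g hg0 hiso a ha hsa (sg c) (hsgs c)
        (P c) (Q c) (hPQ c) (hPQat c)
      rw [← hP, ← hQ] at hε'eq
      have hd : (0:ℝ) < dist (P b) (Q b) := dist_pos.mpr (hPQ b)
      have hsame : ∀ n, ε * sg b n = ε' * sg c n := by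
        intro n
        have h1 := hεeq n
        have h2 := hε'eq n
        rw [h1] at h2
        exact mul_right_cancel₀ hd.ne' h2
      have hεε' : ε = ε' := by
        have := hsame 0
        simpa only [hsg, mul_one] using this
      have hseq : ∀ n, sg b n = sg c n := by
        intro n
        have := hsame n
        rw [hεε'] at this
        have hε'0 : ε' ≠ 0 := by rcases hε' with h | h <;> rw [h] <;> norm_num
        exact mul_left_cancel₀ hε'0 this
      ext k
      have := hseq (k+1)
      simp only [hsg] at this
      by_cases hk : k ∈ b <;> by_cases hk' : k ∈ c <;>
        simp [hk, hk'] at this ⊢ <;> norm_num at this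
    -- Cantor
    obtain ⟨e, he⟩ := (Countable.of_equiv _ (Equiv.refl (M × M)) : Countable (M × M)).exists_injective_nat
    have : Function.Injective (fun b : Set ℕ => e (P b, Q b)) :=
      he.comp hinj
    exact Function.cantor_injective _ this
  · -- distinct sign patterns attain at distinct pairs
    intro a ha hsa s t hs ht ⟨i, hi⟩ ⟨j, hj⟩ p q hpq hats hatt
    obtain ⟨ε, hε, hεeq⟩ := aux_key z g hg0 hiso a ha hsa s hs p q hpq hats
    obtain ⟨ε', hε', hε'eq⟩ := aux_key z g hg0 hiso a ha hsa t ht p q hpq hatt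
    have hd : (0:ℝ) < dist p q := dist_pos.mpr hpq
    have hsame : ∀ n, ε * s n = ε' * t n := by
      intro n
      have h1 := hεeq n
      have h2 := hε'eq n
      rw [h1] at h2
      exact mul_right_cancel₀ hd.ne' h2
    have h1 := hsame i
    have h2 := hsame j
    rw [hi] at h1
    rw [hj] at h2
    rcases hε with hε | hε <;> rcases hε' with hε' | hε' <;>
      rcases ht i with hti | hti <;> rcases ht j with htj | htj <;>
      rw [hε, hε'] at h1 h2 <;> rw [hti] at h1 <;> rw [htj] at h2 <;> nlinarith
end
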